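/- arXiv:1310.0760 — 15 statements merged into one kernel-verified Lean document; each statement's English description precedes it below -/
import Mathlib

section
/- For relatively prime integers q, r ≥ 2, the number of natural numbers not in the numerical semigroup S_{q,r} = {aq + br : a, b ≥ 0} equals (q-1)(r-1)/2. -/
lemma sylv_canon (q r n : ℕ) (hr : 0 < r) (hqr : Nat.Coprime q r) :
    ∃ a, a < r ∧ a * q ≡ n [MOD r] ∧ ((∃ x y : ℕ, n = x * q + y * r) ↔ a * q ≤ n) := by
  haveI : NeZero r := ⟨by omega⟩
  have hu : IsUnit (q : ZMod r) := (ZMod.isUnit_iff_coprime q r).2 hqr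
  set a : ℕ := ((n : ZMod r) * (q : ZMod r)⁻¹).val with ha_def
  have ha_lt : a < r := ZMod.val_lt _
  have hcast : ((a : ℕ) : ZMod r) = (n : ZMod r) * (q : ZMod r)⁻¹ := by
    simp [ha_def, ZMod.natCast_val, ZMod.cast_id]
  have hcong : a * q ≡ n [MOD r] := by
    rw [← ZMod.natCast_eq_natCast_iff]
    push_cast
    rw [hcast, mul_assoc, ZMod.inv_mul_of_unit _ hu, mul_one]
  refine ⟨a, ha_lt, hcong, ?_, ?_⟩
  · rintro ⟨x, y, rfl⟩
    have h2 : x * q + y * r ≡ x * q [MOD r] := by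
      simpa using (Nat.ModEq.add_left (x*q) ((Nat.modEq_zero_iff_dvd).2 ⟨y, mul_comm y r⟩))
    have hx : a ≡ x [MOD r] :=
      Nat.ModEq.cancel_right_of_coprime hqr.symm (hcong.trans h2)
    have hax : a ≤ x := by
      calc a = a % r := (Nat.mod_eq_of_lt ha_lt).symm
        _ = x % r := hx
        _ ≤ x := Nat.mod_le x r
    have : a * q ≤ x * q := Nat.mul_le_mul_right q hax
    omega
  · intro hle
    have hdvd : r ∣ n - a * q := (Nat.modEq_iff_dvd' hle).1 hcong
    obtain ⟨k, hk⟩ := hdvd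
    have := mul_comm r k
    exact ⟨a, k, by omega⟩

lemma sylv_large (q r : ℕ) (hq : 2 ≤ q) (hr : 2 ≤ r) (hqr : Nat.Coprime q r)
    (F : ℕ) (hF : q + r + F = q * r) (n : ℕ) (hn : F < n) :
    ∃ x y : ℕ, n = x * q + y * r := by
  obtain ⟨a, ha, hcong, hiff⟩ := sylv_canon q r n (by omega) hqr
  rw [hiff]
  by_contra h
  push_neg at h
  have hdvd : r ∣ a * q - n := (Nat.modEq_iff_dvd' h.le).1 hcong.symm
  have hge : r ≤ a * q - n := Nat.le_of_dvd (by omega) hdvd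
  have h1 : a * q ≤ (r-1) * q := Nat.mul_le_mul_right q (by omega)
  have e1 : ((r-1)+1) * q = r * q := by congr 1; omega
  have e1' := Nat.add_mul (r-1) 1 q
  have e2 : r * q = q * r := mul_comm r q
  omega

lemma sylv_notF (q r : ℕ) (hq : 2 ≤ q) (hr : 2 ≤ r) (hqr : Nat.Coprime q r)
    (F : ℕ) (hF : q + r + F = q * r) :
    ¬ ∃ x y : ℕ, F = x * q + y * r := by
  rintro ⟨x, y, hxy⟩
  obtain ⟨a, ha, hcong, hiff⟩ := sylv_canon q r F (by omega) hqr
  have e1 : ((r-1)+1) * q = r * q := by congr 1; omega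
  have e1' := Nat.add_mul (r-1) 1 q
  have e2 : r * q = q * r := mul_comm r q
  have e : (r-1) * q = F + r := by omega
  have hc2 : (r-1) * q ≡ F [MOD r] := by
    rw [e]; show (F + r) % r = F % r; exact Nat.add_mod_right F r
  have hax : a ≡ r - 1 [MOD r] :=
    Nat.ModEq.cancel_right_of_coprime hqr.symm (hcong.trans hc2.symm)
  have haeq : a = r - 1 := by
    calc a = a % r := (Nat.mod_eq_of_lt ha).symm
      _ = (r-1) % r := hax
      _ = r - 1 := Nat.mod_eq_of_lt (by omega)
  have hle : a * q ≤ F := hiff.1 ⟨x, y, hxy⟩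
  rw [haeq] at hle
  omega

lemma sylv_symm (q r : ℕ) (hq : 2 ≤ q) (hr : 2 ≤ r) (hqr : Nat.Coprime q r)
    (F : ℕ) (hF : q + r + F = q * r) (n : ℕ) (hn : n ≤ F) :
    (∃ x y : ℕ, n = x * q + y * r) ↔ ¬ (∃ x y : ℕ, F - n = x * q + y * r) := by
  constructor
  · rintro ⟨x, y, hxy⟩ ⟨c, d, hcd⟩
    apply sylv_notF q r hq hr hqr F hF
    refine ⟨x + c, y + d, ?_⟩
    have e1 := Nat.add_mul x c q
    have e2 := Nat.add_mul y d r
    omega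
  · intro hnot
    obtain ⟨a, ha, hcong, hiff⟩ := sylv_canon q r n (by omega) hqr
    rw [hiff]
    by_contra h
    push_neg at h
    have hdvd : r ∣ a * q - n := (Nat.modEq_iff_dvd' h.le).1 hcong.symm
    have hge : r ≤ a * q - n := Nat.le_of_dvd (by omega) hdvd
    obtain ⟨k, hk⟩ := hdvd
    have hk1 : 1 ≤ k := by
      rcases Nat.eq_zero_or_pos k with h0 | h0
      · subst h0; simp at hk; omega
      · exact h0
    apply hnot
    refine ⟨r - 1 - a, k - 1, ?_⟩
    have e1 : ((r-1-a) + a + 1) * q = r * q := by congr 1; omega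
    have e1' := Nat.add_mul ((r-1-a) + a) 1 q
    have e1'' := Nat.add_mul (r-1-a) a q
    have e2 : ((k-1) + 1) * r = k * r := by congr 1; omega
    have e2' := Nat.add_mul (k-1) 1 r
    have e3 : r * q = q * r := mul_comm r q
    have e4 : r * k = k * r := mul_comm r k
    omega

/-- Sylvester's theorem: for coprime `q, r ≥ 2`, the number of natural numbers
not of the form `a*q + b*r` equals `(q-1)(r-1)/2`. -/
theorem sylvester_gap_count (q r : ℕ) (hq : 2 ≤ q) (hr : 2 ≤ r)
    (hqr : Nat.Coprime q r) :
    {n : ℕ | ¬ ∃ a b : ℕ, n = a * q + b * r}.ncard = (q - 1) * (r - 1) / 2 := by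
  classical
  obtain ⟨F, hF⟩ : ∃ F, q + r + F = q * r := by
    have h1 : 2 * r ≤ q * r := Nat.mul_le_mul_right r hq
    have h2 : q * 2 ≤ q * r := Nat.mul_le_mul_left q hr
    exact ⟨q * r - (q + r), by omega⟩
  have hset : {n : ℕ | ¬ ∃ a b : ℕ, n = a * q + b * r} =
      ↑((Finset.range (F+1)).filter (fun n => ¬ ∃ x y : ℕ, n = x * q + y * r)) := by
    ext n
    simp only [Finset.coe_filter, Finset.mem_range, Set.mem_setOf_eq]
    constructor
    · intro h
      refine ⟨?_, h⟩
      by_contra hh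
      exact h (sylv_large q r hq hr hqr F hF n (by omega))
    · rintro ⟨-, h⟩; exact h
  rw [hset, Set.ncard_coe_finset]
  have hbij : ((Finset.range (F+1)).filter (fun n => ¬ ∃ x y : ℕ, n = x * q + y * r)).card =
      ((Finset.range (F+1)).filter (fun n => ∃ x y : ℕ, n = x * q + y * r)).card := by
    refine Finset.card_bij' (fun n _ => F - n) (fun n _ => F - n) ?_ ?_ ?_ ?_
    · intro n hn
      simp only [Finset.mem_filter, Finset.mem_range] at hn ⊢
      refine ⟨by omega, ?_⟩
      have := sylv_symm q r hq hr hqr F hF n (by omega)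
      by_contra hh
      exact hn.2 (this.2 hh)
    · intro n hn
      simp only [Finset.mem_filter, Finset.mem_range] at hn ⊢
      refine ⟨by omega, ?_⟩
      exact (sylv_symm q r hq hr hqr F hF n (by omega)).1 hn.2
    · intro n hn
      simp only [Finset.mem_filter, Finset.mem_range] at hn
      show F - (F - n) = n
      omega
    · intro n hn
      simp only [Finset.mem_filter, Finset.mem_range] at hn
      show F - (F - n) = n
      omega
  have htot := Finset.card_filter_add_card_filter_not
    (s := Finset.range (F+1)) (p := fun n => ∃ x y : ℕ, n = x * q + y * r)
  rw [Finset.card_range] at htot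
  have hN : (q - 1) * (r - 1) = F + 1 := by
    obtain ⟨q', rfl⟩ : ∃ q', q = q' + 2 := ⟨q - 2, by omega⟩
    obtain ⟨r', rfl⟩ : ∃ r', r = r' + 2 := ⟨r - 2, by omega⟩
    have e : (q' + 2) * (r' + 2) = q' * r' + 2 * q' + 2 * r' + 4 := by ring
    rw [e] at hF
    have e2 : (q' + 2 - 1) * (r' + 2 - 1) = q' * r' + q' + r' + 1 := by
      show (q' + 1) * (r' + 1) = _
      ring
    omega
  omega
end

section
/- For coprime q, r ≥ 2, there exists a unique order-preserving bijection ψ : ℕ → S_{q,r}, and this bijection satisfies ψ(x) = x + (q-1)(r-1)/2 for all x ≥ (q-1)(r-1)/2. -/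
/-- For coprime `q, r ≥ 2`, there is a unique order-preserving bijection
`ψ : ℕ → S_{q,r}`, and it satisfies `ψ x = x + (q-1)(r-1)/2` for
`x ≥ (q-1)(r-1)/2`. -/
theorem orderIso_semigroup (q r : ℕ) (hq : 2 ≤ q) (hr : 2 ≤ r)
    (hqr : Nat.Coprime q r) :
    (∃! ψ : ℕ → ℕ, StrictMono ψ ∧
        Set.range ψ = {n : ℕ | ∃ a b : ℕ, n = a * q + b * r}) ∧
      (∀ ψ : ℕ → ℕ, StrictMono ψ →
        Set.range ψ = {n : ℕ | ∃ a b : ℕ, n = a * q + b * r} →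
        ∀ x : ℕ, (q - 1) * (r - 1) / 2 ≤ x →
          ψ x = x + (q - 1) * (r - 1) / 2) := by
  classical
  set P : ℕ → Prop := fun n => ∃ a b : ℕ, n = a * q + b * r with hP
  have hq1 : 1 ≤ q := by omega
  have hr1 : 1 ≤ r := by omega
  have hmn : q + r ≤ q * r := Nat.add_le_mul hq hr
  set F : ℕ := q * r - q - r with hF
  have hFqr : F + (q + r) = q * r := by
    rw [hF, Nat.sub_sub]; exact Nat.sub_add_cancel hmn
  have hmem : ∀ n : ℕ, n ∈ AddSubmonoid.closure ({q, r} : Set ℕ) ↔ P n := by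
    intro n
    rw [AddSubmonoid.mem_closure_pair]
    constructor
    · rintro ⟨a, b, h⟩; exact ⟨a, b, by simpa [smul_eq_mul] using h.symm⟩
    · rintro ⟨a, b, h⟩; exact ⟨a, b, by simpa [smul_eq_mul] using h.symm⟩
  have hfrob := frobeniusNumber_pair hqr hq hr
  have hbig : ∀ n : ℕ, F < n → P n := by
    intro n hn
    by_contra h
    have := hfrob.2 (show n ∈ {k | k ∉ AddSubmonoid.closure ({q, r} : Set ℕ)} from
      fun hc => h ((hmem n).1 hc))
    omega
  -- not both n and F - n representable
  have hns : ∀ n : ℕ, n ≤ F → P n → P (F - n) → False := by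
    rintro n hn ⟨a, b, hab⟩ ⟨a', b', hab'⟩
    have hsum : n + (F - n) = F := by omega
    rw [hab'] at hsum
    rw [hab] at hsum
    have h1 : q * r = (a + a' + 1) * q + (b + b' + 1) * r := by
      rw [← hFqr, ← hsum]; ring
    have hA : r ∣ (a + a' + 1) * q := by
      have h2 : (a + a' + 1) * q + (b + b' + 1) * r = q * r := h1.symm
      have h3 : r ∣ q * r := dvd_mul_left r q
      rw [← h2] at h3
      exact (Nat.dvd_add_iff_left (dvd_mul_left r (b + b' + 1))).mpr h3
    have hB : q ∣ (b + b' + 1) * r := by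
      have h2 : (b + b' + 1) * r + (a + a' + 1) * q = q * r := by omega
      have h3 : q ∣ q * r := dvd_mul_right q r
      rw [← h2] at h3
      exact (Nat.dvd_add_iff_left (dvd_mul_left q (a + a' + 1))).mpr h3
    have ha : r ∣ a + a' + 1 := Nat.Coprime.dvd_of_dvd_mul_right hqr.symm hA
    have hb : q ∣ b + b' + 1 := Nat.Coprime.dvd_of_dvd_mul_right hqr hB
    have hra : r ≤ a + a' + 1 := Nat.le_of_dvd (by omega) ha
    have hqb : q ≤ b + b' + 1 := Nat.le_of_dvd (by omega) hb
    have e1 : r * q ≤ (a + a' + 1) * q := Nat.mul_le_mul_right q hra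
    have e2 : q * r ≤ (b + b' + 1) * r := Nat.mul_le_mul_right r hqb
    rw [mul_comm r q] at e1
    have hpos : 0 < q * r := by positivity
    linarith
  -- integer characterization
  have hPZ : ∀ n : ℕ, (∃ a b : ℤ, 0 ≤ a ∧ 0 ≤ b ∧ (n : ℤ) = a * q + b * r) → P n := by
    rintro n ⟨a, b, ha, hb, h⟩
    refine ⟨a.toNat, b.toNat, ?_⟩
    have := Int.toNat_of_nonneg ha
    have := Int.toNat_of_nonneg hb
    zify
    rw [Int.toNat_of_nonneg ha, Int.toNat_of_nonneg hb]
    exact h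
  -- at least one of n, F - n representable
  have hor : ∀ n : ℕ, n ≤ F → P n ∨ P (F - n) := by
    intro n hn
    obtain ⟨u, v, huv⟩ := (Nat.isCoprime_iff_coprime.mpr hqr)
    set a0 : ℤ := (n * u) % r with ha0
    have hrpos : (0 : ℤ) < r := by exact_mod_cast (by omega : 0 < r)
    have ha0nn : 0 ≤ a0 := Int.emod_nonneg _ (by omega)
    have ha0lt : a0 < r := Int.emod_lt_of_pos _ hrpos
    have hd1 : (r : ℤ) ∣ (n * u - a0) := Int.dvd_self_sub_of_emod_eq rfl
    have hd2 : (r : ℤ) ∣ ((n : ℤ) - n * u * q) := by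
      have : (n : ℤ) - n * u * q = (n * v) * r := by linear_combination (-(n : ℤ)) * huv
      rw [this]; exact dvd_mul_left _ _
    have hd : (r : ℤ) ∣ ((n : ℤ) - a0 * q) := by
      have : ((n : ℤ) - a0 * q) = ((n : ℤ) - n * u * q) + (n * u - a0) * q := by ring
      rw [this]
      exact dvd_add hd2 (Dvd.dvd.mul_right hd1 q)
    set b0 : ℤ := ((n : ℤ) - a0 * q) / r with hb0
    have hneq : (n : ℤ) = a0 * q + b0 * r := by
      rw [hb0, Int.ediv_mul_cancel hd]; ring
    rcases le_or_gt 0 b0 with hb0nn | hb0neg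
    · exact Or.inl (hPZ n ⟨a0, b0, ha0nn, hb0nn, hneq⟩)
    · right
      apply hPZ
      refine ⟨(r : ℤ) - 1 - a0, -1 - b0, by omega, by omega, ?_⟩
      have hFZ : (F : ℤ) + ((q : ℤ) + r) = (q : ℤ) * r := by exact_mod_cast hFqr
      have hcast : ((F - n : ℕ) : ℤ) = (F : ℤ) - n := by
        push_cast [hn]; ring
      rw [hcast]
      linear_combination hFZ - hneq
  -- the set is infinite
  have hinf : (setOf P).Infinite := by
    apply Set.Infinite.mono (s := Set.Ioi F)
    · exact fun n hn => hbig n hn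
    · exact Set.Ioi_infinite F
  -- counting
  set c : ℕ := (q - 1) * (r - 1) / 2 with hc
  have hEven : Even ((q - 1) * (r - 1)) := by
    have : Even (q - 1) ∨ Even (r - 1) := by
      rcases Nat.even_or_odd q with h | h
      · right
        have hodd : Odd r := by
          rcases Nat.even_or_odd r with h' | h'
          · exfalso
            have : (2 : ℕ) ∣ Nat.gcd q r := Nat.dvd_gcd h.two_dvd h'.two_dvd
            rw [hqr] at this; omega
          · exact h'
        rcases hodd with ⟨k, hk⟩
        exact ⟨k, by omega⟩
      · left
        rcases h with ⟨k, hk⟩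
        exact ⟨k, by omega⟩
    rcases this with h | h
    · exact h.mul_right _
    · exact h.mul_left _
  have h2c : 2 * c = (q - 1) * (r - 1) := Nat.mul_div_cancel' hEven.two_dvd
  have hprod : (q - 1) * (r - 1) + q + r = q * r + 1 := by
    zify [hq1, hr1]; ring
  have hF2c : F + 1 = 2 * c := by
    rw [h2c]; omega
  have hcount1 : Nat.count P (F + 1) = c := by
    have hkey : ((Finset.range (F + 1)).filter P).card
        = ((Finset.range (F + 1)).filter (fun x => ¬ P x)).card := by
      apply Finset.card_bij (fun n _ => F - n)
      · intro n hn
        simp only [Finset.mem_filter, Finset.mem_range] at hn ⊢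
        refine ⟨by omega, fun hPF => hns n (by omega) hn.2 hPF⟩
      · intro n1 h1 n2 h2 h
        simp only [Finset.mem_filter, Finset.mem_range] at h1 h2
        omega
      · intro m hm
        simp only [Finset.mem_filter, Finset.mem_range] at hm
        refine ⟨F - m, ?_, by omega⟩
        simp only [Finset.mem_filter, Finset.mem_range]
        rcases hor m (by omega) with h | h
        · exact absurd h hm.2
        · exact ⟨by omega, h⟩
    have hsplit := Finset.card_filter_add_card_filter_not
      (s := Finset.range (F + 1)) (p := P)
    rw [Finset.card_range, ← hkey] at hsplit
    rw [Nat.count_eq_card_filter_range]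
    clear_value F c
    have heta : (Finset.filter (fun x => P x) (Finset.range (F + 1))).card
        = (Finset.filter P (Finset.range (F + 1))).card := rfl
    omega
  have hcount : ∀ N : ℕ, 2 * c ≤ N → Nat.count P N = N - c := by
    intro N hN
    induction N with
    | zero => omega
    | succ M ih =>
      rcases Nat.lt_or_ge M (2 * c) with hM | hM
      · have : M + 1 = 2 * c := by omega
        rw [this, ← hF2c, hcount1]; omega
      · rw [Nat.count_succ, if_pos (hbig M (by omega)), ih hM]
        omega
  -- the formula for nth
  have hnth : ∀ x : ℕ, c ≤ x → Nat.nth P x = x + c := by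
    intro x hx
    have hpx : P (x + c) := hbig _ (by omega)
    have := Nat.nth_count hpx
    rwa [hcount (x + c) (by omega), Nat.add_sub_cancel] at this
  refine ⟨⟨Nat.nth P, ⟨Nat.nth_strictMono hinf, Nat.range_nth_of_infinite hinf⟩, ?_⟩, ?_⟩
  · rintro ψ ⟨hmono, hrange⟩
    exact (hmono.range_inj (Nat.nth_strictMono hinf)).mp
      (hrange.trans (Nat.range_nth_of_infinite hinf).symm)
  · intro ψ hmono hrange x hx
    have hψ : ψ = Nat.nth P := (hmono.range_inj (Nat.nth_strictMono hinf)).mp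
      (hrange.trans (Nat.range_nth_of_infinite hinf).symm)
    rw [hψ, hnth x hx]
end

section
/- Let p₁, ..., p_l be pairwise coprime integers with each pᵢ ≥ 2, and let G be the numerical semigroup generated by the numbers P/pᵢ where P = p₁⋯p_l. Then every element n of G can be written uniquely as n = P(k + Σᵢ xᵢ/pᵢ) with k ≥ 0 an integer and 0 ≤ xᵢ < pᵢ for all i. -/
/-- Normal form in the numerical semigroup generated by `P/pᵢ`, `P = p₁⋯p_l`:
every element has a unique expression `k*P + Σᵢ xᵢ*(P/pᵢ)` with `0 ≤ xᵢ < pᵢ`. -/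
theorem normal_form_unique (l : ℕ) (p : Fin l → ℕ) (h2 : ∀ i, 2 ≤ p i)
    (hcop : ∀ i j, i ≠ j → Nat.Coprime (p i) (p j)) (n : ℕ)
    (hn : ∃ a : Fin l → ℕ, n = ∑ i, a i * ((∏ j, p j) / p i)) :
    ∃! kx : ℕ × (Fin l → ℕ), (∀ i, kx.2 i < p i) ∧
      n = kx.1 * (∏ j, p j) + ∑ i, kx.2 i * ((∏ j, p j) / p i) := by
  set P := ∏ j, p j with hPdef
  have hpos : ∀ i, 0 < p i := fun i => lt_of_lt_of_le two_pos (h2 i)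
  have hdvd : ∀ i, p i ∣ P := fun i => Finset.dvd_prod_of_mem p (Finset.mem_univ i)
  have hq : ∀ i, P / p i * p i = P := fun i => Nat.div_mul_cancel (hdvd i)
  have hqe : ∀ i, P / p i = ∏ j ∈ Finset.univ.erase i, p j := by
    intro i
    have h := Finset.mul_prod_erase Finset.univ p (Finset.mem_univ i)
    rw [hPdef, ← h, Nat.mul_div_cancel_left _ (hpos i)]
  have hdvdq : ∀ i j, i ≠ j → p i ∣ P / p j := by
    intro i j hij
    rw [hqe j]
    exact Finset.dvd_prod_of_mem p (by simp [Finset.mem_erase, hij])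
  have hcoq : ∀ i, Nat.Coprime (P / p i) (p i) := by
    intro i
    rw [hqe i]
    exact Nat.Coprime.prod_left (fun j hj => hcop j i (Finset.ne_of_mem_erase hj))
  have key : ∀ (i : Fin l) (k : ℕ) (x : Fin l → ℕ),
      (k * P + ∑ j, x j * (P / p j)) ≡ x i * (P / p i) [MOD p i] := by
    intro i k x
    have h1 : k * P ≡ 0 [MOD p i] :=
      (Nat.modEq_zero_iff_dvd).mpr ((hdvd i).mul_left k)
    have h2 : ∑ j, x j * (P / p j) ≡ x i * (P / p i) [MOD p i] := by
      rw [← Finset.add_sum_erase Finset.univ _ (Finset.mem_univ i)]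
      have h3 : ∑ j ∈ Finset.univ.erase i, x j * (P / p j) ≡ 0 [MOD p i] := by
        refine (Nat.modEq_zero_iff_dvd).mpr (Finset.dvd_sum fun j hj => ?_)
        exact ((hdvdq i j (Finset.ne_of_mem_erase hj).symm)).mul_left _
      simpa using (Nat.ModEq.refl (x i * (P / p i))).add h3
    simpa using h1.add h2
  have hPpos : 0 < P := Finset.prod_pos (fun i _ => hpos i)
  have uniq : ∀ (k k' : ℕ) (x y : Fin l → ℕ), (∀ i, x i < p i) → (∀ i, y i < p i) →
      k * P + ∑ i, x i * (P / p i) = k' * P + ∑ i, y i * (P / p i) →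
      k = k' ∧ x = y := by
    intro k k' x y hx hy heq
    have hxy : x = y := by
      funext i
      have h1 := key i k x
      have h2 := key i k' y
      rw [heq] at h1
      have h3 : x i * (P / p i) ≡ y i * (P / p i) [MOD p i] := h1.symm.trans h2
      have h4 : x i ≡ y i [MOD p i] := h3.cancel_right_of_coprime (hcoq i).symm.gcd_eq_one
      have h5 : x i % p i = y i % p i := h4
      rwa [Nat.mod_eq_of_lt (hx i), Nat.mod_eq_of_lt (hy i)] at h5
    subst hxy
    refine ⟨?_, rfl⟩
    exact Nat.eq_of_mul_eq_mul_right hPpos (Nat.add_right_cancel heq)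
  obtain ⟨a, ha⟩ := hn
  have hrep : n = (∑ i, a i / p i) * P + ∑ i, (a i % p i) * (P / p i) := by
    rw [ha]
    have hstep : ∀ i ∈ Finset.univ, a i * (P / p i) =
        (a i / p i) * P + (a i % p i) * (P / p i) := by
      intro i _
      have hpq : p i * (P / p i) = P := by rw [mul_comm]; exact hq i
      conv_lhs => rw [← Nat.div_add_mod (a i) (p i)]
      rw [add_mul, mul_comm (p i) (a i / p i), mul_assoc, hpq]
    rw [Finset.sum_congr rfl hstep, Finset.sum_add_distrib, ← Finset.sum_mul]
  refine ⟨⟨∑ i, a i / p i, fun i => a i % p i⟩,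
    ⟨fun i => Nat.mod_lt _ (hpos i), hrep⟩, ?_⟩
  rintro ⟨k', y⟩ ⟨hy, hye⟩
  obtain ⟨h1, h2⟩ := uniq k' (∑ i, a i / p i) y (fun i => a i % p i) hy
    (fun i => Nat.mod_lt _ (hpos i)) (by rw [← hye]; exact hrep)
  exact Prod.ext h1 h2
end

section
/- Let q, r ≥ 2 be coprime and let ψ : ℕ → S_{q,r} be the order-preserving bijection. If b ∈ ℕ satisfies 1 + ⌊b/(qr)⌋ > Δ_{q,r}(ψ(b)) (i.e., b is a 'bad point'), then ψ(b) = b + (q-1)(r-1)/2. -/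
section Aux

variable {q r : ℕ}

/-- reduce first coefficient below `r` -/
lemma rep_small (hr : 0 < r) {x : ℕ} (h : ∃ a c : ℕ, x = a * q + c * r) :
    ∃ a c : ℕ, a < r ∧ x = a * q + c * r := by
  obtain ⟨a, c, rfl⟩ := h
  refine ⟨a % r, c + q * (a / r), Nat.mod_lt _ hr, ?_⟩
  conv_lhs => rw [← Nat.mod_add_div a r]
  ring

lemma exists_small (hqr : Nat.Coprime q r) (hr : 0 < r) (x : ℕ) :
    ∃ a m : ℕ, a < r ∧ (x + m * r = a * q ∨ x = a * q + m * r) := by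
  haveI : NeZero r := ⟨hr.ne'⟩
  set a := ((x : ZMod r) * (q : ZMod r)⁻¹).val with ha
  have haq : a * q ≡ x [MOD r] := by
    have h1 : ((a * q : ℕ) : ZMod r) = (x : ZMod r) := by
      push_cast
      rw [ha, ZMod.natCast_val, ZMod.cast_id]
      rw [mul_assoc, ZMod.inv_mul_of_unit]
      · exact (mul_one _)
      · exact (ZMod.unitOfCoprime q hqr).isUnit
    exact (ZMod.natCast_eq_natCast_iff _ _ _).mp h1
  have hlt : a < r := ZMod.val_lt _
  rcases le_or_gt (a * q) x with h | h
  · obtain ⟨m, hm⟩ := (Nat.modEq_iff_dvd' h).mp haq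
    exact ⟨a, m, hlt, Or.inr (by rw [mul_comm m r]; omega)⟩
  · obtain ⟨m, hm⟩ := (Nat.modEq_iff_dvd' h.le).mp haq.symm
    exact ⟨a, m, hlt, Or.inl (by rw [mul_comm m r]; omega)⟩

lemma not_rep (hqr : Nat.Coprime q r) (hr : 0 < r) {x a m : ℕ}
    (ha : a < r) (h : x + m * r = a * q) (hm : 1 ≤ m) :
    ¬ ∃ a c : ℕ, x = a * q + c * r := by
  rintro hP
  obtain ⟨a', c, ha', rfl⟩ := rep_small hr hP
  have key : a' * q + (c + m) * r = a * q := by rw [← h]; ring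
  have h1 : a * q ≡ a' * q [MOD r] := by
    show a * q % r = a' * q % r
    rw [← key, Nat.add_mul_mod_self_right]
  have h2 : a ≡ a' [MOD r] := Nat.ModEq.cancel_right_of_coprime hqr.symm h1
  have he : a = a' := by
    rw [Nat.ModEq, Nat.mod_eq_of_lt ha, Nat.mod_eq_of_lt ha'] at h2
    exact h2
  subst he
  have hpos : 0 < m * r := Nat.mul_pos hm hr
  omega

end Aux

section Aux2

variable {q r : ℕ}

/-- every `x ≥ (q-1)(r-1)` is representable -/
lemma rep_of_ge (hq : 2 ≤ q) (hr : 2 ≤ r) (hqr : Nat.Coprime q r) {x : ℕ}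
    (hx : (q - 1) * (r - 1) ≤ x) : ∃ a c : ℕ, x = a * q + c * r := by
  obtain ⟨a, m, ha, h | h⟩ := exists_small hqr (by omega) x
  · rcases Nat.eq_zero_or_pos m with rfl | hm
    · exact ⟨a, 0, by simpa using h⟩
    · exfalso
      obtain ⟨q', rfl⟩ : ∃ q', q = q' + 2 := ⟨q - 2, by omega⟩
      obtain ⟨r', rfl⟩ : ∃ r', r = r' + 2 := ⟨r - 2, by omega⟩
      have hx' : (q' + 1) * (r' + 1) ≤ x := by
        have e1 : q' + 2 - 1 = q' + 1 := by omega
        have e2 : r' + 2 - 1 = r' + 1 := by omega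
        rwa [e1, e2] at hx
      nlinarith [Nat.mul_le_mul_right (q' + 2) (show a ≤ r' + 1 by omega)]
  · exact ⟨a, m, h⟩

/-- symmetry, forward direction -/
lemma sym_fwd (hq : 2 ≤ q) (hr : 2 ≤ r) (hqr : Nat.Coprime q r) {x y : ℕ}
    (hxy : x + y + 1 = (q - 1) * (r - 1)) (hx : ∃ a c : ℕ, x = a * q + c * r) :
    ¬ ∃ a c : ℕ, y = a * q + c * r := by
  rintro hy
  obtain ⟨a, c, ha, rfl⟩ := rep_small (show 0 < r by omega) hx
  obtain ⟨a', c', ha', rfl⟩ := rep_small (show 0 < r by omega) hy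
  obtain ⟨q', rfl⟩ : ∃ q', q = q' + 2 := ⟨q - 2, by omega⟩
  obtain ⟨r', rfl⟩ : ∃ r', r = r' + 2 := ⟨r - 2, by omega⟩
  have hxy' : a * (q' + 2) + c * (r' + 2) + (a' * (q' + 2) + c' * (r' + 2)) + 1
      = (q' + 1) * (r' + 1) := by
    have e1 : q' + 2 - 1 = q' + 1 := by omega
    have e2 : r' + 2 - 1 = r' + 1 := by omega
    rwa [e1, e2] at hxy
  have key : (a + a' + 1) * (q' + 2) + (c + c' + 1) * (r' + 2)
      = (q' + 2) * (r' + 2) := by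
    zify at hxy' ⊢
    linear_combination hxy'
  have keyZ : ((a : ℤ) + a' + 1) * (q' + 2) + ((c : ℤ) + c' + 1) * (r' + 2)
      = ((q' : ℤ) + 2) * (r' + 2) := by exact_mod_cast key
  have hdvdZ : ((r' : ℤ) + 2) ∣ ((a : ℤ) + a' + 1) * ((q' : ℤ) + 2) :=
    ⟨(q' : ℤ) + 2 - ((c : ℤ) + c' + 1), by linear_combination keyZ⟩
  have hdvd : (r' + 2) ∣ (a + a' + 1) * (q' + 2) := by
    have := Int.natCast_dvd_natCast.mp (by push_cast; exact hdvdZ)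
    exact this
  have hdvd2 : (r' + 2) ∣ a + a' + 1 :=
    Nat.Coprime.dvd_of_dvd_mul_right hqr.symm hdvd
  have hge : r' + 2 ≤ a + a' + 1 := Nat.le_of_dvd (by omega) hdvd2
  nlinarith [Nat.mul_le_mul_right (q' + 2) hge,
    Nat.le_mul_of_pos_left (r' + 2) (show 0 < c + c' + 1 by omega)]

/-- symmetry, backward direction -/
lemma sym_bwd (hq : 2 ≤ q) (hr : 2 ≤ r) (hqr : Nat.Coprime q r) {x y : ℕ}
    (hxy : x + y + 1 = (q - 1) * (r - 1)) (hx : ¬ ∃ a c : ℕ, x = a * q + c * r) :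
    ∃ a c : ℕ, y = a * q + c * r := by
  obtain ⟨a, m, ha, h | h⟩ := exists_small hqr (show 0 < r by omega) x
  · rcases Nat.eq_zero_or_pos m with rfl | hm
    · exact absurd ⟨a, 0, by simpa using h⟩ hx
    · obtain ⟨q', rfl⟩ : ∃ q', q = q' + 2 := ⟨q - 2, by omega⟩
      obtain ⟨r', rfl⟩ : ∃ r', r = r' + 2 := ⟨r - 2, by omega⟩
      have hxy' : x + y + 1 = (q' + 1) * (r' + 1) := by
        have e1 : q' + 2 - 1 = q' + 1 := by omega
        have e2 : r' + 2 - 1 = r' + 1 := by omega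
        rwa [e1, e2] at hxy
      obtain ⟨a2, ha2⟩ : ∃ a2, a2 + a + 1 = r' + 2 := ⟨r' + 1 - a, by omega⟩
      obtain ⟨m2, hm2⟩ : ∃ m2, m2 + 1 = m := ⟨m - 1, by omega⟩
      refine ⟨a2, m2, ?_⟩
      zify at h hxy' ha2 hm2 ⊢
      linear_combination hxy' - h - ((q' : ℤ) + 2) * ha2 - ((r' : ℤ) + 2) * hm2
  · exact absurd ⟨a, m, h⟩ hx

end Aux2

section Count

open Finset

variable {q r : ℕ}

lemma half_count (hq : 2 ≤ q) (hr : 2 ≤ r) (hqr : Nat.Coprime q r)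
    [DecidablePred fun n : ℕ => ∃ a c : ℕ, n = a * q + c * r] :
    2 * ((Finset.range ((q - 1) * (r - 1))).filter
      (fun n : ℕ => ∃ a c : ℕ, n = a * q + c * r)).card = (q - 1) * (r - 1) := by
  set G := (q - 1) * (r - 1) with hG
  have hG1 : 1 ≤ G := by
    have := Nat.mul_le_mul (show 1 ≤ q - 1 by omega) (show 1 ≤ r - 1 by omega)
    simpa [hG] using this
  have hsplit : ((range G).filter (fun n : ℕ => ∃ a c : ℕ, n = a * q + c * r)).card
      + ((range G).filter (fun n : ℕ => ¬ ∃ a c : ℕ, n = a * q + c * r)).card = G := by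
    rw [Finset.card_filter_add_card_filter_not, Finset.card_range]
  have hbij : ((range G).filter (fun n : ℕ => ∃ a c : ℕ, n = a * q + c * r)).card
      = ((range G).filter (fun n : ℕ => ¬ ∃ a c : ℕ, n = a * q + c * r)).card := by
    apply Finset.card_bij' (fun x _ => G - 1 - x) (fun x _ => G - 1 - x)
    · intro x hx
      rw [Finset.mem_filter, Finset.mem_range] at hx ⊢
      refine ⟨by omega, ?_⟩
      exact sym_fwd hq hr hqr (by omega) hx.2
    · intro x hx
      rw [Finset.mem_filter, Finset.mem_range] at hx ⊢
      refine ⟨by omega, ?_⟩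
      exact sym_bwd hq hr hqr (by omega) hx.2
    · intro x hx
      rw [Finset.mem_filter, Finset.mem_range] at hx
      omega
    · intro x hx
      rw [Finset.mem_filter, Finset.mem_range] at hx
      omega
  omega

lemma count_of_ge (hq : 2 ≤ q) (hr : 2 ≤ r) (hqr : Nat.Coprime q r)
    [DecidablePred fun n : ℕ => ∃ a c : ℕ, n = a * q + c * r]
    {N : ℕ} (hN : (q - 1) * (r - 1) ≤ N) :
    2 * ((Finset.range N).filter
      (fun n : ℕ => ∃ a c : ℕ, n = a * q + c * r)).card + (q - 1) * (r - 1) = 2 * N := by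
  set G := (q - 1) * (r - 1) with hG
  have hrange : range N = range G ∪ Ico G N := by
    simp only [range_eq_Ico]
    rw [Finset.Ico_union_Ico_eq_Ico (Nat.zero_le G) hN]
  have hdisj : Disjoint ((range G).filter (fun n : ℕ => ∃ a c : ℕ, n = a * q + c * r))
      ((Ico G N).filter (fun n : ℕ => ∃ a c : ℕ, n = a * q + c * r)) := by
    apply Finset.disjoint_filter_filter
    simp only [range_eq_Ico]
    exact Finset.Ico_disjoint_Ico_consecutive 0 G N
  have hfull : (Ico G N).filter (fun n : ℕ => ∃ a c : ℕ, n = a * q + c * r) = Ico G N := by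
    apply Finset.filter_true_of_mem
    intro x hx
    rw [Finset.mem_Ico] at hx
    exact rep_of_ge hq hr hqr hx.1
  have hcard : ((range N).filter (fun n : ℕ => ∃ a c : ℕ, n = a * q + c * r)).card
      = ((range G).filter (fun n : ℕ => ∃ a c : ℕ, n = a * q + c * r)).card + (N - G) := by
    rw [hrange, Finset.filter_union, Finset.card_union_of_disjoint hdisj, hfull,
      Nat.card_Ico]
  have hhalf := half_count (q := q) (r := r) hq hr hqr
  rw [← hG] at hhalf
  omega

end Count

lemma even_genus {q r : ℕ} (hq : 2 ≤ q) (hr : 2 ≤ r) (hqr : Nat.Coprime q r) :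
    2 * ((q - 1) * (r - 1) / 2) = (q - 1) * (r - 1) := by
  have heven : Even ((q - 1) * (r - 1)) := by
    rcases Nat.even_or_odd q with hq' | hq'
    · rcases Nat.even_or_odd r with hr' | hr'
      · exfalso
        have h2 : 2 ∣ Nat.gcd q r := Nat.dvd_gcd hq'.two_dvd hr'.two_dvd
        rw [hqr] at h2
        omega
      · exact (Nat.Odd.sub_odd hr' odd_one).mul_left _
    · exact (Nat.Odd.sub_odd hq' odd_one).mul_right _
  obtain ⟨k, hk⟩ := heven
  omega


/-- `Δ_{q,r}(x) = 1 + max{k : x - k*q*r ∈ S_{q,r}}` for `x ∈ S_{q,r}`. -/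
noncomputable def Dqr (q r x : ℕ) : ℕ :=
  1 + @Nat.findGreatest
    (fun k => ∃ a c : ℕ, x = a * q + c * r + k * (q * r)) (Classical.decPred _) x

/-- A bad point `b` of the order-preserving bijection `ψ : ℕ → S_{q,r}`
(one with `Δ^{qr}(b) > Δ_{q,r}(ψ(b))`) satisfies `ψ(b) = b + (q-1)(r-1)/2`. -/
theorem bad_point_shift (q r : ℕ) (hq : 2 ≤ q) (hr : 2 ≤ r)
    (hqr : Nat.Coprime q r) (ψ : ℕ → ℕ) (hmono : StrictMono ψ)
    (hrange : Set.range ψ = {n : ℕ | ∃ a b : ℕ, n = a * q + b * r})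
    (b : ℕ) (hbad : Dqr q r (ψ b) < 1 + b / (q * r)) :
    ψ b = b + (q - 1) * (r - 1) / 2 := by
  classical
  -- badness forces b ≥ q*r
  have hD1 : 1 ≤ Dqr q r (ψ b) := Nat.le_add_right 1 _
  have hdiv : 1 ≤ b / (q * r) := by omega
  have hqrb : q * r ≤ b := (Nat.one_le_div_iff (by positivity)).mp hdiv
  have hGqr : (q - 1) * (r - 1) ≤ q * r :=
    Nat.mul_le_mul (by omega) (by omega)
  have hGb : (q - 1) * (r - 1) ≤ b := le_trans hGqr hqrb
  have hpsi_ge : b ≤ ψ b := hmono.le_apply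
  -- b equals the number of semigroup elements below ψ b
  have himg : (Finset.range (ψ b)).filter (fun n : ℕ => ∃ a c : ℕ, n = a * q + c * r)
      = (Finset.range b).image ψ := by
    ext n
    simp only [Finset.mem_filter, Finset.mem_range, Finset.mem_image]
    constructor
    · rintro ⟨hn, hPn⟩
      have hmem : n ∈ Set.range ψ := by
        rw [hrange]
        exact hPn
      obtain ⟨i, rfl⟩ := hmem
      exact ⟨i, hmono.lt_iff_lt.mp hn, rfl⟩
    · rintro ⟨i, hi, rfl⟩
      refine ⟨hmono hi, ?_⟩
      have hmem : ψ i ∈ Set.range ψ := ⟨i, rfl⟩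
      rw [hrange] at hmem
      exact hmem
  have hcardb : ((Finset.range (ψ b)).filter
      (fun n : ℕ => ∃ a c : ℕ, n = a * q + c * r)).card = b := by
    rw [himg, Finset.card_image_of_injective _ hmono.injective, Finset.card_range]
  have hcount := count_of_ge (q := q) (r := r) hq hr hqr
    (N := ψ b) (le_trans hGb hpsi_ge)
  have heven := even_genus hq hr hqr
  omega
end

section
/- Let q, r ≥ 2 be coprime, ψ : ℕ → S_{q,r} the order-preserving bijection, and k ≥ 1 an integer. If b ∈ [kqr, (k+1)qr) is a bad point of ψ (meaning Δ^{qr}(b) > Δ_{q,r}(ψ(b))), then b < kqr + (q-1)(r-1)/2, and the defect Δ^{qr}(b) - Δ_{q,r}(ψ(b)) equals 1. -/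
/-!
The numerical semigroup `S = S_{q,r}` has Frobenius number `F = qr - q - r`, and `x ↦ F - x`
exchanges its elements and its gaps in `[0, F]`; so `S` has exactly `g = (q-1)(r-1)/2` gaps, all
below `2g = F + 1`, and `ψ b = b + g` once `b ≥ 2g`. For `b ∈ [kqr, (k+1)qr)` we have
`Δ^{qr}(b) = 1 + k`, and `ψ b - (k-1)qr ≥ qr + g > F` lies in `S`, so `Δ_{q,r}(ψ b) ≥ k`:
the defect is at most `1`. At a bad point `ψ b - kqr = b + g - kqr` is a gap, hence at most
`F = 2g - 1`, which forces `b < kqr + g`.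
-/

open Finset Nat

theorem Nat.count_apply_of_strictMono {p : ℕ → Prop} [DecidablePred p] {ψ : ℕ → ℕ}
    (hmono : StrictMono ψ) (hrange : Set.range ψ = {x | p x}) (n : ℕ) : count p (ψ n) = n := by
  have hp (x : ℕ) : p x ↔ ∃ m, ψ m = x := (Set.ext_iff.mp hrange x).symm
  have : {x ∈ range (ψ n) | p x} = (range n).map ⟨ψ, hmono.injective⟩ := by
    ext x
    simp only [mem_filter, mem_range, mem_map, Function.Embedding.coeFn_mk, hp]
    constructor
    · rintro ⟨hlt, m, rfl⟩
      exact ⟨m, hmono.lt_iff_lt.mp hlt, rfl⟩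
    · rintro ⟨m, hm, rfl⟩
      exact ⟨hmono hm, m, rfl⟩
  rw [count_eq_card_filter_range, this, card_map, card_range]

section ClosurePair

variable {q r : ℕ}

theorem mem_closure_pair_iff {x : ℕ} :
    x ∈ AddSubmonoid.closure ({q, r} : Set ℕ) ↔ ∃ a b : ℕ, x = a * q + b * r := by
  simp [AddSubmonoid.mem_closure_pair, eq_comm]

theorem sub_one_mul_sub_one_eq_frobenius_add_one (hq : 1 < q) (hr : 1 < r) :
    (q - 1) * (r - 1) = q * r - q - r + 1 := by
  have hsum : q + r ≤ q * r := add_le_mul hq hr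
  zify [hq.le, hr.le, hsum, (by omega : q ≤ q * r), (by omega : r ≤ q * r - q)]
  ring

variable (hqr : Coprime q r) (hq : 1 < q) (hr : 1 < r)
include hqr hq hr

theorem mem_closure_pair_of_le {x : ℕ} (hx : (q - 1) * (r - 1) ≤ x) :
    x ∈ AddSubmonoid.closure ({q, r} : Set ℕ) :=
  (frobeniusNumber_iff.mp (frobeniusNumber_pair hqr hq hr)).2 x
    (by rw [sub_one_mul_sub_one_eq_frobenius_add_one hq hr] at hx; omega)

theorem mem_closure_pair_iff_sub_notMem {x : ℕ} (hx : x < (q - 1) * (r - 1)) :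
    x ∈ AddSubmonoid.closure ({q, r} : Set ℕ) ↔
      (q - 1) * (r - 1) - 1 - x ∉ AddSubmonoid.closure ({q, r} : Set ℕ) := by
  have hN := sub_one_mul_sub_one_eq_frobenius_add_one hq hr
  have hF := (frobeniusNumber_iff.mp (frobeniusNumber_pair hqr hq hr)).1
  constructor
  · intro hxS hyS
    exact hF (by convert add_mem hxS hyS using 1; omega)
  · intro hyS
    by_contra hxS
    apply hyS
    -- With `qa ≡ x [MOD r]`, `a < r`, the gap `x` gives `qa = x + mr`, `m ≥ 1`, and then
    -- `F - x = (r-1-a)q + (m-1)r`.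
    obtain ⟨a, ha, hmod⟩ := exists_mul_mod_eq_of_coprime x hqr (by omega : r ≠ 0)
    have hlt : x < q * a := by
      by_contra! hle
      obtain ⟨c, hc⟩ := dvd_of_mod_eq_zero (sub_mod_eq_zero_of_mod_eq hmod.symm)
      exact hxS (mem_closure_pair_iff.mpr ⟨a, c, by rw [mul_comm a q, mul_comm c r]; omega⟩)
    obtain ⟨m, hm⟩ := dvd_of_mod_eq_zero (sub_mod_eq_zero_of_mod_eq hmod)
    have hm1 : 1 ≤ m := by
      rcases m with _ | m
      · simp at hm; omega
      · omega
    refine mem_closure_pair_iff.mpr ⟨r - 1 - a, m - 1, ?_⟩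
    zify [hlt.le] at hm
    zify [hm1, (by omega : a ≤ r - 1), hr.le, hq.le, (by omega : 1 ≤ (q - 1) * (r - 1)),
      (by omega : x ≤ (q - 1) * (r - 1) - 1)]
    linear_combination hm

open Classical in
theorem two_mul_count_closure_pair :
    2 * count (· ∈ AddSubmonoid.closure ({q, r} : Set ℕ)) ((q - 1) * (r - 1)) =
      (q - 1) * (r - 1) := by
  set N := (q - 1) * (r - 1)
  have hsplit := card_filter_add_card_filter_not (s := range N)
    (· ∈ AddSubmonoid.closure ({q, r} : Set ℕ))
  have hreflect : #{x ∈ range N | x ∈ AddSubmonoid.closure ({q, r} : Set ℕ)} =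
      #{x ∈ range N | x ∉ AddSubmonoid.closure ({q, r} : Set ℕ)} := by
    refine card_nbij' (fun x => N - 1 - x) (fun x => N - 1 - x) ?_ ?_ ?_ ?_ <;>
      intro x hx <;> simp only [coe_filter, mem_range, Set.mem_ofPred_eq] at hx ⊢
    · exact ⟨by omega, (mem_closure_pair_iff_sub_notMem hqr hq hr hx.1).mp hx.2⟩
    · have h := mem_closure_pair_iff_sub_notMem hqr hq hr (x := N - 1 - x) (by omega)
      rw [show N - 1 - (N - 1 - x) = x by omega] at h
      exact ⟨by omega, h.mpr hx.2⟩
    · omega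
    · omega
  rw [card_range] at hsplit
  rw [count_eq_card_filter_range]
  omega

theorem two_mul_sub_one_mul_sub_one_div_two :
    2 * ((q - 1) * (r - 1) / 2) = (q - 1) * (r - 1) := by
  classical
  have := two_mul_count_closure_pair hqr hq hr
  omega

open Classical in
theorem count_closure_pair_add {M : ℕ} (hM : (q - 1) * (r - 1) ≤ M) :
    count (· ∈ AddSubmonoid.closure ({q, r} : Set ℕ)) M + (q - 1) * (r - 1) / 2 = M := by
  obtain ⟨d, rfl⟩ := exists_add_of_le hM
  rw [count_add,
    count_of_forall fun k _ => mem_closure_pair_of_le hqr hq hr (Nat.le_add_right _ k)]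
  have := two_mul_count_closure_pair hqr hq hr
  omega

open Classical in
theorem apply_eq_add_of_strictMono_range_closure_pair {ψ : ℕ → ℕ} (hmono : StrictMono ψ)
    (hrange : Set.range ψ = AddSubmonoid.closure ({q, r} : Set ℕ)) {n : ℕ}
    (hn : (q - 1) * (r - 1) ≤ n) : ψ n = n + (q - 1) * (r - 1) / 2 := by
  have := count_closure_pair_add hqr hq hr (hn.trans hmono.le_apply)
  rw [Nat.count_apply_of_strictMono (p := (· ∈ AddSubmonoid.closure ({q, r} : Set ℕ)))
    hmono hrange] at this
  omega

end ClosurePair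

theorem lt_Dqr_iff {q r x j : ℕ} (hqr : 0 < q * r)
    (hx : x ∈ AddSubmonoid.closure ({q, r} : Set ℕ)) :
    j < Dqr q r x ↔
      j * (q * r) ≤ x ∧ x - j * (q * r) ∈ AddSubmonoid.closure ({q, r} : Set ℕ) := by
  set P : ℕ → Prop := fun i => ∃ a c : ℕ, x = a * q + c * r + i * (q * r)
  have hP (i : ℕ) : P i ↔
      i * (q * r) ≤ x ∧ x - i * (q * r) ∈ AddSubmonoid.closure ({q, r} : Set ℕ) := by
    rw [mem_closure_pair_iff]
    constructor
    · rintro ⟨a, c, rfl⟩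
      exact ⟨by omega, a, c, by omega⟩
    · rintro ⟨h, a, c, hac⟩
      exact ⟨a, c, by omega⟩
  rw [← hP]
  change j < 1 + @Nat.findGreatest P (Classical.decPred P) x ↔ P j
  constructor
  -- `P` is downward closed (move `qr`s into the `q`-part), so `findGreatest` is its maximum.
  · intro hj
    obtain ⟨a, c, hac⟩ := @Nat.findGreatest_spec 0 P (Classical.decPred P) x (zero_le x)
      ((hP 0).mpr (by simpa using hx))
    obtain ⟨d, hd⟩ :=
      exists_add_of_le (by omega : j ≤ @Nat.findGreatest P (Classical.decPred P) x)
    exact ⟨a + d * r, c, by rw [hac, hd]; ring⟩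
  · intro h
    have hjx : j ≤ x := (Nat.le_mul_of_pos_right j hqr).trans ((hP j).mp h).1
    have := @Nat.le_findGreatest j P (Classical.decPred P) x hjx h
    omega

theorem bad_point_location_and_defect_general (q r : ℕ) (hq : 2 ≤ q) (hr : 2 ≤ r)
    (hqr : Nat.Coprime q r) (ψ : ℕ → ℕ) (hmono : StrictMono ψ)
    (hrange : Set.range ψ = {n : ℕ | ∃ a b : ℕ, n = a * q + b * r})
    (k : ℕ) (b : ℕ) (hb1 : k * (q * r) ≤ b)
    (hb2 : b < (k + 1) * (q * r))
    (hbad : Dqr q r (ψ b) < 1 + b / (q * r)) :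
    b < k * (q * r) + (q - 1) * (r - 1) / 2 ∧
      1 + b / (q * r) = Dqr q r (ψ b) + 1 := by
  have hqr0 : 0 < q * r := by positivity
  have hrange' : Set.range ψ = AddSubmonoid.closure ({q, r} : Set ℕ) := by
    rw [hrange]
    exact Set.ext fun x => mem_closure_pair_iff.symm
  have hψS : ψ b ∈ AddSubmonoid.closure ({q, r} : Set ℕ) := by
    rw [← SetLike.mem_coe, ← hrange']
    exact Set.mem_range_self b
  rw [Nat.div_eq_of_lt_le hb1 hb2] at hbad ⊢
  have hk : 1 ≤ k := by
    have := (lt_Dqr_iff hqr0 hψS (j := 0)).mpr (by simpa using hψS)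
    omega
  have hN : (q - 1) * (r - 1) ≤ q * r := Nat.mul_le_mul (Nat.sub_le q 1) (Nat.sub_le r 1)
  have hkqr : q * r ≤ k * (q * r) := Nat.le_mul_of_pos_left _ hk
  have hψ : ψ b = b + (q - 1) * (r - 1) / 2 :=
    apply_eq_add_of_strictMono_range_closure_pair hqr hq hr hmono hrange' (by omega)
  have hprev : k - 1 < Dqr q r (ψ b) := by
    rw [lt_Dqr_iff hqr0 hψS, Nat.sub_one_mul]
    exact ⟨by omega, mem_closure_pair_of_le hqr hq hr (by omega)⟩
  have hgap : ψ b - k * (q * r) < (q - 1) * (r - 1) := by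
    by_contra! h
    have := (lt_Dqr_iff hqr0 hψS).mpr ⟨by omega, mem_closure_pair_of_le hqr hq hr h⟩
    omega
  have := two_mul_sub_one_mul_sub_one_div_two hqr hq hr
  omega

/-- A bad point `b ∈ [kqr, (k+1)qr)` of the order-preserving bijection
`ψ : ℕ → S_{q,r}` satisfies `b < kqr + (q-1)(r-1)/2` and has defect `1`. -/
theorem bad_point_location_and_defect (q r : ℕ) (hq : 2 ≤ q) (hr : 2 ≤ r)
    (hqr : Nat.Coprime q r) (ψ : ℕ → ℕ) (hmono : StrictMono ψ)
    (hrange : Set.range ψ = {n : ℕ | ∃ a b : ℕ, n = a * q + b * r})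
    (k : ℕ) (hk : 1 ≤ k) (b : ℕ) (hb1 : k * (q * r) ≤ b)
    (hb2 : b < (k + 1) * (q * r))
    (hbad : Dqr q r (ψ b) < 1 + b / (q * r)) :
    b < k * (q * r) + (q - 1) * (r - 1) / 2 ∧
      1 + b / (q * r) = Dqr q r (ψ b) + 1 :=
  bad_point_location_and_defect_general q r hq hr hqr ψ hmono hrange k b hb1 hb2 hbad
end

section
/- Let q, r ≥ 2 be coprime and let k ≥ 1. If b ∈ [kqr, kqr + (q-1)(r-1)/2) is a bad point of the order-preserving bijection ψ : ℕ → S_{q,r}, then θ(b) := 2kqr - b - 1 lies in [kqr - (q-1)(r-1)/2, kqr), satisfies Δ^{qr}(θ(b)) = k, and Δ_{q,r}(ψ(θ(b))) = k + 1 (i.e., θ(b) is a good point with defect -1). -/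
section Aux

variable {q r : ℕ}

private def Pqr (q r n : ℕ) : Prop := ∃ a c : ℕ, n = a * q + c * r

private lemma toP {n : ℕ} {a b : ℤ} (ha : 0 ≤ a) (hb : 0 ≤ b)
    (h : (n : ℤ) = a * q + b * r) : Pqr q r n := by
  refine ⟨a.toNat, b.toNat, ?_⟩
  have h2 : ((a.toNat * q + b.toNat * r : ℕ) : ℤ) = (n : ℤ) := by
    push_cast
    rw [Int.toNat_of_nonneg ha, Int.toNat_of_nonneg hb]
    linarith
  exact_mod_cast h2.symm

private lemma Padd {x y : ℕ} (hx : Pqr q r x) (hy : Pqr q r y) : Pqr q r (x + y) := by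
  obtain ⟨a, c, rfl⟩ := hx
  obtain ⟨a', c', rfl⟩ := hy
  exact ⟨a + a', c + c', by ring⟩

private lemma qr_add_le (hq : 2 ≤ q) (hr : 2 ≤ r) : q + r ≤ q * r := by
  obtain ⟨a, rfl⟩ : ∃ a, q = a + 2 := ⟨q - 2, by omega⟩
  obtain ⟨c, rfl⟩ : ∃ c, r = c + 2 := ⟨r - 2, by omega⟩
  have : (a + 2) * (c + 2) = a * c + 2 * a + 2 * c + 4 := by ring
  omega

private lemma two_g (hq : 2 ≤ q) (hr : 2 ≤ r) (hqr : Nat.Coprime q r) :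
    2 * ((q - 1) * (r - 1) / 2) + q + r = q * r + 1 := by
  have heven : 2 ∣ (q - 1) * (r - 1) := by
    rcases Nat.even_or_odd q with heq | hoq
    · have : ¬ 2 ∣ r := by
        intro h2r
        have := Nat.dvd_gcd heq.two_dvd h2r
        rw [hqr] at this; omega
      have : 2 ∣ r - 1 := by omega
      exact Dvd.dvd.mul_left this _
    · obtain ⟨mq, hmq⟩ := hoq
      have : 2 ∣ q - 1 := by omega
      exact Dvd.dvd.mul_right this _
  obtain ⟨a, rfl⟩ : ∃ a, q = a + 2 := ⟨q - 2, by omega⟩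
  obtain ⟨c, rfl⟩ : ∃ c, r = c + 2 := ⟨r - 2, by omega⟩
  have h1 : (a + 2) * (c + 2) = a * c + 2 * a + 2 * c + 4 := by ring
  have h2 : (a + 2 - 1) * (c + 2 - 1) = a * c + a + c + 1 := by
    have e1 : a + 2 - 1 = a + 1 := rfl
    have e2 : c + 2 - 1 = c + 1 := rfl
    rw [e1, e2]; ring
  omega

private lemma notP_F (hq : 2 ≤ q) (hr : 2 ≤ r) (hqr : Nat.Coprime q r) :
    ¬ Pqr q r (q * r - q - r) := by
  rintro ⟨a, b, hab⟩
  have hle := qr_add_le hq hr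
  have key : (a + 1) * q + (b + 1) * r = q * r := by
    have : a * q + b * r + q + r = q * r := by omega
    ring_nf
    ring_nf at this
    omega
  have hqd : q ∣ b + 1 := by
    have h1 : q ∣ (b + 1) * r := by
      have : (b + 1) * r = q * r - (a + 1) * q := by omega
      rw [this]
      exact Nat.dvd_sub (Dvd.intro r rfl) (Dvd.intro_left (a+1) rfl)
    exact (Nat.Coprime.dvd_of_dvd_mul_right hqr h1)
  have hrd : r ∣ a + 1 := by
    have h1 : r ∣ (a + 1) * q := by
      have : (a + 1) * q = q * r - (b + 1) * r := by omega
      rw [this]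
      exact Nat.dvd_sub (Dvd.intro_left q rfl) (Dvd.intro_left (b+1) rfl)
    exact (Nat.Coprime.dvd_of_dvd_mul_right hqr.symm h1)
  have h1 : q ≤ b + 1 := Nat.le_of_dvd (by omega) hqd
  have h2 : r ≤ a + 1 := Nat.le_of_dvd (by omega) hrd
  have h3 : r * q ≤ (a + 1) * q := Nat.mul_le_mul_right q h2
  have h4 : q * r ≤ (b + 1) * r := Nat.mul_le_mul_right r h1
  have h5 : 0 < q * r := by positivity
  have : r * q = q * r := by ring
  omega

private lemma master (hq : 2 ≤ q) (hr : 2 ≤ r) (hqr : Nat.Coprime q r) (n : ℕ) :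
    Pqr q r n ∨ ∃ m : ℕ, n + m = q * r - q - r ∧ Pqr q r m := by
  obtain ⟨s, t, hst⟩ := hqr.isCoprime
  have hr0 : (0 : ℤ) < r := by exact_mod_cast (by omega : 0 < r)
  set u : ℤ := (n * s) % r with hu
  set m : ℤ := (n * s) / r with hm
  have hdiv : (n : ℤ) * s = r * m + u := (Int.mul_ediv_add_emod _ _).symm
  have hu0 : 0 ≤ u := Int.emod_nonneg _ (by omega)
  have hur : u < r := Int.emod_lt_of_pos _ hr0
  set b : ℤ := m * q + n * t with hb
  have hrep : (n : ℤ) = u * q + b * r := by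
    have : (n : ℤ) = (n * s) * q + (n * t) * r := by
      have := hst
      nlinarith [hst]
    rw [this, hdiv]; ring
  rcases le_or_gt 0 b with hb0 | hb0
  · exact Or.inl (toP hu0 hb0 hrep)
  · right
    have hle := qr_add_le hq hr
    have hFc : ((q * r - q - r : ℕ) : ℤ) = (q : ℤ) * r - q - r := by
      push_cast [Nat.sub_sub]
      omega
    have hrep2 : ((q * r - q - r : ℕ) : ℤ) - n = (r - 1 - u) * q + (-1 - b) * r := by
      rw [hFc, hrep]; ring
    have h1 : 0 ≤ (r : ℤ) - 1 - u := by omega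
    have h2 : 0 ≤ (-1 : ℤ) - b := by omega
    have hq0 : (0:ℤ) ≤ q := by positivity
    have hnle : (n : ℤ) ≤ ((q * r - q - r : ℕ) : ℤ) := by nlinarith
    have hnleN : n ≤ q * r - q - r := by exact_mod_cast hnle
    refine ⟨q * r - q - r - n, by omega, toP h1 h2 ?_⟩
    push_cast [Nat.cast_sub hnleN]
    linarith [hrep2]

private lemma P_of_large (hq : 2 ≤ q) (hr : 2 ≤ r) (hqr : Nat.Coprime q r)
    {n : ℕ} (hn : q * r - q - r < n) : Pqr q r n := by
  rcases master hq hr hqr n with h | ⟨m, hm, _⟩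
  · exact h
  · omega

open Finset in
open scoped Classical in
private lemma count_gaps (hq : 2 ≤ q) (hr : 2 ≤ r) (hqr : Nat.Coprime q r) :
    #((range (q * r - q - r + 1)).filter (fun n => ¬ Pqr q r n)) = (q - 1) * (r - 1) / 2 := by
  classical
  set F := q * r - q - r with hF
  have hcard : #((range (F + 1)).filter (fun n => ¬ Pqr q r n)) =
      #((range (F + 1)).filter (fun n => Pqr q r n)) := by
    apply Finset.card_bij (fun a _ => F - a)
    · intro a ha
      simp only [mem_filter, mem_range] at ha ⊢
      rcases master hq hr hqr a with h | ⟨m, hm, hPm⟩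
      · exact absurd h ha.2
      · have : F - a = m := by omega
        exact ⟨by omega, this ▸ hPm⟩
    · intro a ha b hb hab
      simp only [mem_filter, mem_range] at ha hb
      omega
    · intro b hb
      simp only [mem_filter, mem_range] at hb
      refine ⟨F - b, ?_, by omega⟩
      simp only [mem_filter, mem_range]
      refine ⟨by omega, fun hP => ?_⟩
      have : Pqr q r (b + (F - b)) := Padd hb.2 hP
      have hFb : b + (F - b) = F := by omega
      rw [hFb] at this
      exact notP_F hq hr hqr this
  have hsum : #((range (F + 1)).filter (fun n => Pqr q r n)) +
      #((range (F + 1)).filter (fun n => ¬ Pqr q r n)) = F + 1 := by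
    rw [Finset.card_filter_add_card_filter_not, card_range]
  have h2g := two_g hq hr hqr
  have hle := qr_add_le hq hr
  omega

open Finset in
private lemma psi_eq (hq : 2 ≤ q) (hr : 2 ≤ r) (hqr : Nat.Coprime q r)
    (ψ : ℕ → ℕ) (hmono : StrictMono ψ)
    (hrange : Set.range ψ = {n : ℕ | ∃ a b : ℕ, n = a * q + b * r})
    {n : ℕ} (hn : (q - 1) * (r - 1) / 2 ≤ n) :
    ψ n = n + (q - 1) * (r - 1) / 2 := by
  classical
  set F := q * r - q - r with hF
  set g := (q - 1) * (r - 1) / 2 with hg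
  have hmem : ∀ x, Pqr q r x ↔ ∃ i, ψ i = x := by
    intro x
    rw [← Set.mem_range (f := ψ), hrange]
    exact Iff.rfl |>.symm.trans Iff.rfl
  have hPψ : ∀ i, Pqr q r (ψ i) := fun i => (hmem (ψ i)).2 ⟨i, rfl⟩
  -- counting: #(S ∩ [0, ψ m)) = m
  have hcount : ∀ m, #((range (ψ m)).filter (fun x => Pqr q r x)) = m := by
    intro m
    have himg : (range m).image ψ = (range (ψ m)).filter (fun x => Pqr q r x) := by
      ext x
      simp only [mem_image, mem_filter, mem_range]
      constructor
      · rintro ⟨i, hi, rfl⟩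
        exact ⟨hmono hi, hPψ i⟩
      · rintro ⟨hx, hPx⟩
        obtain ⟨i, rfl⟩ := (hmem x).1 hPx
        exact ⟨i, hmono.lt_iff_lt.1 hx, rfl⟩
    rw [← himg, Finset.card_image_of_injective _ hmono.injective, card_range]
  have hsplit : ∀ x, #((range x).filter (fun y => Pqr q r y)) +
      #((range x).filter (fun y => ¬ Pqr q r y)) = x := by
    intro x
    rw [Finset.card_filter_add_card_filter_not, card_range]
  have hG := count_gaps hq hr hqr
  have h2g := two_g hq hr hqr
  have hle := qr_add_le hq hr
  have hcPF : #((range (F + 1)).filter (fun y => Pqr q r y)) = g := by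
    have := hsplit (F + 1)
    rw [hG] at this
    omega
  -- ψ n > F
  have hψF : F < ψ n := by
    by_contra hle2
    push_neg at hle2
    have hne : ψ n ≠ F := fun h => notP_F hq hr hqr (by have hh := hPψ n; rw [h] at hh; exact hh)
    have hlt : ψ n + 1 ≤ F + 1 := by omega
    have hmono2 : #((range (ψ n + 1)).filter (fun y => Pqr q r y)) ≤
        #((range (F + 1)).filter (fun y => Pqr q r y)) :=
      Finset.card_le_card (Finset.filter_subset_filter _ (by
        intro x hx; simp only [mem_range] at hx ⊢; omega))
    have hsucc : #((range (ψ n + 1)).filter (fun y => Pqr q r y)) = n + 1 := by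
      rw [Finset.range_add_one, Finset.filter_insert, if_pos (hPψ n),
        Finset.card_insert_of_notMem (by simp), hcount]
    omega
  -- gaps below ψ n = g
  have hgaps : #((range (ψ n)).filter (fun y => ¬ Pqr q r y)) = g := by
    have hsub : (range (ψ n)).filter (fun y => ¬ Pqr q r y) =
        (range (F + 1)).filter (fun y => ¬ Pqr q r y) := by
      ext x
      simp only [mem_filter, mem_range]
      constructor
      · rintro ⟨hx, hnp⟩
        refine ⟨?_, hnp⟩
        by_contra hxF
        exact hnp (P_of_large hq hr hqr (by omega))
      · rintro ⟨hx, hnp⟩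
        exact ⟨by omega, hnp⟩
    rw [hsub, hG]
  have := hsplit (ψ n)
  rw [hcount, hgaps] at this
  omega

end Aux

/-- If `b ∈ [kqr, kqr + (q-1)(r-1)/2)` is a bad point of the order-preserving
bijection `ψ : ℕ → S_{q,r}`, then `θ(b) = 2kqr - b - 1` lies in
`[kqr - (q-1)(r-1)/2, kqr)`, has `Δ^{qr}(θ(b)) = k`, and
`Δ_{q,r}(ψ(θ(b))) = k + 1`, i.e. `θ(b)` is a good point with defect `-1`. -/
theorem control_point_good (q r : ℕ) (hq : 2 ≤ q) (hr : 2 ≤ r)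
    (hqr : Nat.Coprime q r) (ψ : ℕ → ℕ) (hmono : StrictMono ψ)
    (hrange : Set.range ψ = {n : ℕ | ∃ a b : ℕ, n = a * q + b * r})
    (k : ℕ) (hk : 1 ≤ k) (b : ℕ) (hb1 : k * (q * r) ≤ b)
    (hb2 : b < k * (q * r) + (q - 1) * (r - 1) / 2)
    (hbad : Dqr q r (ψ b) < 1 + b / (q * r)) :
    k * (q * r) - (q - 1) * (r - 1) / 2 ≤ 2 * k * (q * r) - b - 1 ∧
      2 * k * (q * r) - b - 1 < k * (q * r) ∧
      1 + (2 * k * (q * r) - b - 1) / (q * r) = k ∧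
      Dqr q r (ψ (2 * k * (q * r) - b - 1)) = k + 1 := by
  classical
  set g := (q - 1) * (r - 1) / 2 with hg
  set F := q * r - q - r with hF
  have h2g := two_g hq hr hqr
  have hle := qr_add_le hq hr
  have hq0 : 0 < q := by omega
  have hr0 : 0 < r := by omega
  have hqr0 : 0 < q * r := by positivity
  have hqrk : q * r ≤ k * (q * r) := Nat.le_mul_of_pos_left _ hk
  have hg1 : 1 ≤ g := by omega
  have hgqr : 2 * g ≤ q * r := by omega
  set t := b - k * (q * r) with ht
  have hbt : b = k * (q * r) + t := by omega
  have htg : t < g := by omega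
  -- ψ b = b + g
  have hψb : ψ b = b + g := psi_eq hq hr hqr ψ hmono hrange (by omega)
  -- b / (q*r) = k
  have hbdiv : b / (q * r) = k := by
    apply Nat.div_eq_of_lt_le (by omega)
    have h1 : (k + 1) * (q * r) = k * (q * r) + q * r := by ring
    omega
  -- from hbad : ¬ Pqr q r (t + g)
  have hnotP : ¬ Pqr q r (t + g) := by
    intro hP
    obtain ⟨a, c, hac⟩ := hP
    have hPk : ∃ a' c' : ℕ, ψ b = a' * q + c' * r + k * (q * r) :=
      ⟨a, c, by rw [hψb, hbt]; omega⟩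
    have hkle : k ≤ ψ b := by
      rw [hψb]; calc k ≤ k * (q * r) := Nat.le_mul_of_pos_right _ hqr0
        _ ≤ b + g := by omega
    have := @Nat.le_findGreatest k
      (fun j => ∃ a' c' : ℕ, ψ b = a' * q + c' * r + j * (q * r))
      (Classical.decPred _) (ψ b) hkle hPk
    rw [Dqr, hbdiv] at hbad
    omega
  -- symmetry: Pqr (g - 1 - t)
  have hP' : Pqr q r (g - 1 - t) := by
    rcases master hq hr hqr (t + g) with h | ⟨m, hm, hPm⟩
    · exact absurd h hnotP
    · have : m = g - 1 - t := by omega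
      exact this ▸ hPm
  set θ := 2 * k * (q * r) - b - 1 with hθ
  have h2k : 2 * k * (q * r) = 2 * (k * (q * r)) := by ring
  have hθval : θ = k * (q * r) - t - 1 := by omega
  have hθ1 : k * (q * r) - g ≤ θ := by omega
  have hθ2 : θ < k * (q * r) := by omega
  -- ψ θ = θ + g
  have hψθ : ψ θ = θ + g := psi_eq hq hr hqr ψ hmono hrange (by omega)
  have hψθval : ψ θ = k * (q * r) + (g - 1 - t) := by omega
  refine ⟨hθ1, hθ2, ?_, ?_⟩
  · -- 1 + θ / (q*r) = k
    have : θ / (q * r) = k - 1 := by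
      apply Nat.div_eq_of_lt_le
      · have : (k - 1) * (q * r) + q * r = k * (q * r) := by
          have : (k - 1) * (q * r) = k * (q * r) - q * r := by
            rw [Nat.sub_mul, Nat.one_mul]
          omega
        omega
      · have : (k - 1 + 1) * (q * r) = k * (q * r) := by rw [Nat.sub_add_cancel hk]
        omega
    omega
  · -- Dqr q r (ψ θ) = k + 1
    rw [Dqr]
    have : @Nat.findGreatest
        (fun j => ∃ a c : ℕ, ψ θ = a * q + c * r + j * (q * r))
        (Classical.decPred _) (ψ θ) = k := by
      rw [Nat.findGreatest_eq_iff]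
      refine ⟨?_, fun _ => ?_, ?_⟩
      · calc k ≤ k * (q * r) := Nat.le_mul_of_pos_right _ hqr0
          _ ≤ ψ θ := by omega
      · obtain ⟨a, c, hac⟩ := hP'
        exact ⟨a, c, by omega⟩
      · rintro j hj _ ⟨a, c, hac⟩
        have hjge : (k + 1) * (q * r) ≤ j * (q * r) :=
          Nat.mul_le_mul_right _ (by omega)
        have : (k + 1) * (q * r) = k * (q * r) + q * r := by ring
        omega
    omega
end

section
/- Let Y = Σ(p₁,...,p_l) be a Seifert homology sphere (p_i pairwise coprime, each ≥ 2), Δ_Y(n) = 1 + |e₀|n - Σᵢ ⌈n pᵢ'/pᵢ⌉ its delta function, and N_Y = p₁⋯p_l((l-2) - Σ 1/pᵢ). Then Δ_Y(n) = -Δ_Y(N_Y - n) for all integers 0 ≤ n ≤ N_Y. -/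
lemma ceil_div_eq (p : ℕ) (hp : 0 < p) (q r : ℤ) (h0 : 0 ≤ r) (hr : r < (p:ℤ)) :
    ⌈(((p:ℤ) * q + r : ℤ) : ℚ) / (p:ℚ)⌉ = q + if r = 0 then 0 else 1 := by
  have hpQ : (p:ℚ) ≠ 0 := by positivity
  have h1 : (((p:ℤ) * q + r : ℤ) : ℚ) / (p:ℚ) = (r:ℚ)/(p:ℚ) + ((q:ℤ):ℚ) := by
    push_cast; field_simp; ring
  rw [h1, Int.ceil_add_intCast]
  split_ifs with h
  · subst h; simp
  · have hrpos : (0:ℚ) < (r:ℚ)/(p:ℚ) := by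
      apply div_pos
      · exact_mod_cast lt_of_le_of_ne h0 (Ne.symm h)
      · positivity
    have hle : (r:ℚ)/(p:ℚ) ≤ 1 := by
      rw [div_le_one (by positivity)]; exact_mod_cast le_of_lt hr
    have c1 : ⌈(r:ℚ)/(p:ℚ)⌉ ≤ 1 := Int.ceil_le.mpr (by simpa)
    have c2 : 0 < ⌈(r:ℚ)/(p:ℚ)⌉ := Int.lt_ceil.mpr (by simpa)
    omega

lemma ceil_pair (p : ℕ) (hp : 2 ≤ p) (a b k : ℤ) (hab : a + b = (p:ℤ) * k + 1) :
    ⌈((a:ℤ):ℚ)/(p:ℚ)⌉ + ⌈((b:ℤ):ℚ)/(p:ℚ)⌉ = k + 1 := by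
  have hp0 : 0 < p := by omega
  have hpz : (0:ℤ) < (p:ℤ) := by exact_mod_cast hp0
  set qa := a / (p:ℤ) with hqa
  set ra := a % (p:ℤ) with hra
  have ha : a = (p:ℤ) * qa + ra := (Int.mul_ediv_add_emod a (p:ℤ)).symm
  have hr0 : 0 ≤ ra := Int.emod_nonneg a (by omega)
  have hrlt : ra < (p:ℤ) := Int.emod_lt_of_pos a hpz
  have Ha := ceil_div_eq p hp0 qa ra hr0 hrlt
  rw [← ha] at Ha
  by_cases h0 : ra = 0
  · have hb : b = (p:ℤ) * (k - qa) + 1 := by linear_combination hab - ha - h0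
    have Hb := ceil_div_eq p hp0 (k - qa) 1 (by omega) (by exact_mod_cast hp)
    rw [← hb] at Hb
    rw [Ha, Hb]
    simp [h0]
    ring
  · by_cases h1 : ra = 1
    · have hb : b = (p:ℤ) * (k - qa) + 0 := by linear_combination hab - ha - h1
      have Hb := ceil_div_eq p hp0 (k - qa) 0 (by omega) (by exact_mod_cast hp0)
      rw [← hb] at Hb
      rw [Ha, Hb]
      simp [h0]
      ring
    · have hb : b = (p:ℤ) * (k - qa - 1) + ((p:ℤ) + 1 - ra) := by linear_combination hab - ha
      have Hb := ceil_div_eq p hp0 (k - qa - 1) ((p:ℤ) + 1 - ra) (by omega) (by omega)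
      rw [← hb] at Hb
      rw [Ha, Hb]
      have : ¬((p:ℤ) + 1 - ra = 0) := by omega
      simp [h0, this]
      ring


/-- The delta function of a Seifert homology sphere:
`Δ_Y(n) = 1 + |e₀| n - Σᵢ ⌈n pᵢ'/pᵢ⌉`. -/
noncomputable def seifDelta {l : ℕ} (p : Fin l → ℕ) (e0 : ℤ) (p' : Fin l → ℤ)
    (n : ℤ) : ℤ :=
  1 + |e0| * n - ∑ i, ⌈((n * p' i : ℤ) : ℚ) / ((p i : ℕ) : ℚ)⌉

/-- `N_Y = p₁⋯p_l((l-2) - Σᵢ 1/pᵢ)`. -/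
def seifN {l : ℕ} (p : Fin l → ℕ) : ℤ :=
  (∏ i, (p i : ℤ)) * ((l : ℤ) - 2) - ∑ i, (((∏ j, p j) / p i : ℕ) : ℤ)

/-- Antisymmetry of the Seifert delta function: `Δ_Y(n) = -Δ_Y(N_Y - n)`
for `0 ≤ n ≤ N_Y`. -/
theorem seifDelta_antisymm (l : ℕ) (p : Fin l → ℕ) (h2 : ∀ i, 2 ≤ p i)
    (hcop : ∀ i j, i ≠ j → Nat.Coprime (p i) (p j))
    (e0 : ℤ) (p' : Fin l → ℤ)
    (hp' : ∀ i, 0 ≤ p' i ∧ p' i ≤ (p i : ℤ) - 1)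
    (heq : e0 * ∏ i, (p i : ℤ) + ∑ i, (((∏ j, p j) / p i : ℕ) : ℤ) * p' i = -1)
    (n : ℤ) (hn0 : 0 ≤ n) (hnN : n ≤ seifN p) :
    seifDelta p e0 p' n = -seifDelta p e0 p' (seifN p - n) := by
  classical
  have hdvd : ∀ i, p i ∣ ∏ j, p j := fun i => Finset.dvd_prod_of_mem p (Finset.mem_univ i)
  have hPpos : 0 < ∏ j, p j := Finset.prod_pos (fun i _ => by have := h2 i; omega)
  have hPZ : (∏ i, (p i : ℤ)) = ((∏ j, p j : ℕ) : ℤ) := by push_cast; rfl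
  have hPiMul : ∀ i, (((∏ j, p j) / p i : ℕ) : ℤ) * (p i : ℤ) = ((∏ j, p j : ℕ) : ℤ) := by
    intro i; exact_mod_cast congrArg (Nat.cast : ℕ → ℤ) (Nat.div_mul_cancel (hdvd i))
  have hPerase : ∀ i, ((∏ j, p j) / p i : ℕ) = ∏ j ∈ Finset.univ.erase i, p j := by
    intro i
    have h := Finset.mul_prod_erase Finset.univ p (Finset.mem_univ i)
    have hpi : 0 < p i := by have := h2 i; omega
    rw [← h, Nat.mul_div_cancel_left _ hpi]
  have hdij : ∀ i j, i ≠ j → (p i : ℤ) ∣ (((∏ k, p k) / p j : ℕ) : ℤ) := by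
    intro i j hij
    rw [hPerase j]
    exact_mod_cast Int.natCast_dvd_natCast.mpr
      (Finset.dvd_prod_of_mem p (Finset.mem_erase.mpr ⟨hij, Finset.mem_univ i⟩))
  -- key divisibility: p i ∣ N * p' i - 1
  have hNdvd : ∀ i, (p i : ℤ) ∣ seifN p * p' i - 1 := by
    intro i
    have hsplit : ∑ j, (((∏ k, p k) / p j : ℕ) : ℤ) * p' j
        = (((∏ k, p k) / p i : ℕ) : ℤ) * p' i
          + ∑ j ∈ Finset.univ.erase i, (((∏ k, p k) / p j : ℕ) : ℤ) * p' j :=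
      (Finset.add_sum_erase Finset.univ _ (Finset.mem_univ i)).symm
    have hsplit2 : ∑ j, (((∏ k, p k) / p j : ℕ) : ℤ)
        = (((∏ k, p k) / p i : ℕ) : ℤ)
          + ∑ j ∈ Finset.univ.erase i, (((∏ k, p k) / p j : ℕ) : ℤ) :=
      (Finset.add_sum_erase Finset.univ _ (Finset.mem_univ i)).symm
    have d1 : (p i : ℤ) ∣ ((∏ j, p j : ℕ) : ℤ) := Int.natCast_dvd_natCast.mpr (hdvd i)
    have d2 : (p i : ℤ) ∣ ∑ j ∈ Finset.univ.erase i, (((∏ k, p k) / p j : ℕ) : ℤ) * p' j :=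
      Finset.dvd_sum fun j hj =>
        Dvd.dvd.mul_right (hdij i j (fun e => (Finset.mem_erase.mp hj).1 e.symm)) _
    have d3 : (p i : ℤ) ∣ ∑ j ∈ Finset.univ.erase i, (((∏ k, p k) / p j : ℕ) : ℤ) :=
      Finset.dvd_sum fun j hj =>
        hdij i j (fun e => (Finset.mem_erase.mp hj).1 e.symm)
    -- p i ∣ Pi * p' i + 1
    have dPi : (p i : ℤ) ∣ (((∏ k, p k) / p i : ℕ) : ℤ) * p' i + 1 := by
      have : (((∏ k, p k) / p i : ℕ) : ℤ) * p' i + 1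
          = -(e0 * ((∏ j, p j : ℕ) : ℤ))
            - ∑ j ∈ Finset.univ.erase i, (((∏ k, p k) / p j : ℕ) : ℤ) * p' j := by
        rw [← hPZ]; linear_combination heq - hsplit
      rw [this]
      exact dvd_sub (dvd_neg.mpr (Dvd.dvd.mul_left d1 e0)) d2
    have hNeq : seifN p * p' i - 1
        = ((∏ j, p j : ℕ) : ℤ) * (((l : ℤ) - 2) * p' i)
          - (∑ j ∈ Finset.univ.erase i, (((∏ k, p k) / p j : ℕ) : ℤ)) * p' i
          - ((((∏ k, p k) / p i : ℕ) : ℤ) * p' i + 1) := by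
      simp only [seifN]
      rw [hPZ, hsplit2]; ring
    rw [hNeq]
    exact dvd_sub (dvd_sub (Dvd.dvd.mul_right d1 _) (Dvd.dvd.mul_right d3 _)) dPi
  -- choose k i with N * p' i = p i * k i + 1
  choose k hk using fun i => (hNdvd i)
  have hkeq : ∀ i, seifN p * p' i = (p i : ℤ) * k i + 1 := by
    intro i; have := hk i; linarith
  -- e0 negative
  have hSnn : 0 ≤ ∑ i, (((∏ j, p j) / p i : ℕ) : ℤ) * p' i :=
    Finset.sum_nonneg fun i _ => mul_nonneg (Int.natCast_nonneg _) (hp' i).1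
  have hPZpos : (0:ℤ) < ((∏ j, p j : ℕ) : ℤ) := by exact_mod_cast hPpos
  have he0 : e0 < 0 := by
    by_contra h
    push_neg at h
    have : 0 ≤ e0 * ∏ i, (p i : ℤ) := by
      rw [hPZ]; exact mul_nonneg h (le_of_lt hPZpos)
    omega
  have habs : |e0| = -e0 := abs_of_neg he0
  -- sum of k
  have hksum : ∑ i, k i = 2 - (l : ℤ) - e0 * seifN p := by
    have hcancel : ((∏ j, p j : ℕ) : ℤ) * (∑ i, k i)
        = ((∏ j, p j : ℕ) : ℤ) * (2 - (l : ℤ) - e0 * seifN p) := by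
      rw [Finset.mul_sum]
      have step : ∀ i ∈ Finset.univ, ((∏ j, p j : ℕ) : ℤ) * k i
          = (((∏ j, p j) / p i : ℕ) : ℤ) * (seifN p * p' i) - (((∏ j, p j) / p i : ℕ) : ℤ) := by
        intro i _
        rw [← hPiMul i]
        have := hkeq i
        linear_combination (-(((∏ j, p j) / p i : ℕ) : ℤ)) * this
      rw [Finset.sum_congr rfl step, Finset.sum_sub_distrib]
      have h1 : ∑ i, (((∏ j, p j) / p i : ℕ) : ℤ) * (seifN p * p' i)
          = seifN p * ∑ i, (((∏ j, p j) / p i : ℕ) : ℤ) * p' i := by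
        rw [Finset.mul_sum]; apply Finset.sum_congr rfl; intro i _; ring
      rw [h1]
      have h2 : ∑ i, (((∏ j, p j) / p i : ℕ) : ℤ) * p' i = -1 - e0 * ((∏ j, p j : ℕ) : ℤ) := by
        rw [← hPZ]; linarith [heq]
      have h3 : ∑ i, (((∏ j, p j) / p i : ℕ) : ℤ)
          = ((∏ j, p j : ℕ) : ℤ) * ((l : ℤ) - 2) - seifN p := by
        simp only [seifN]; rw [hPZ]; ring
      rw [h2, h3]; ring
    exact mul_left_cancel₀ (ne_of_gt hPZpos) hcancel
  -- pair the ceilings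
  have hpair : ∀ i ∈ Finset.univ,
      ⌈((n * p' i : ℤ) : ℚ) / ((p i : ℕ) : ℚ)⌉
        + ⌈(((seifN p - n) * p' i : ℤ) : ℚ) / ((p i : ℕ) : ℚ)⌉ = k i + 1 := by
    intro i _
    exact ceil_pair (p i) (h2 i) (n * p' i) ((seifN p - n) * p' i) (k i)
      (by linear_combination hkeq i)
  -- conclude
  have hzero : seifDelta p e0 p' n + seifDelta p e0 p' (seifN p - n) = 0 := by
    simp only [seifDelta]
    have hsum : (∑ i, ⌈((n * p' i : ℤ) : ℚ) / ((p i : ℕ) : ℚ)⌉)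
        + ∑ i, ⌈(((seifN p - n) * p' i : ℤ) : ℚ) / ((p i : ℕ) : ℚ)⌉
        = ∑ i, (k i + 1) := by
      rw [← Finset.sum_add_distrib]
      exact Finset.sum_congr rfl hpair
    have hsum2 : ∑ i, (k i + 1) = (2 - (l : ℤ) - e0 * seifN p) + l := by
      rw [Finset.sum_add_distrib, hksum]; simp
    rw [habs]
    linarith [hsum, hsum2]
  linarith [hzero]
end

section
/- With notation as in the Seifert delta function setup: if n ∈ G_Y is written as n = p₁⋯p_l (Σᵢ xᵢ/pᵢ) with xᵢ ≥ 0 integers, then Δ_Y(n) = 1 + Σᵢ ⌊xᵢ/pᵢ⌋. -/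
lemma ceil_aux (a b m : ℤ) (hb : 0 < b) (hm0 : 0 ≤ m) (hmb : m < b) (hd : b ∣ a + m) :
    ⌈((a:ℚ))/((b:ℚ))⌉ = (a + m) / b := by
  obtain ⟨q, hq⟩ := hd
  have hb' : (b:ℚ) ≠ 0 := by exact_mod_cast hb.ne'
  have ha : (a:ℚ)/b = -((m:ℚ)/b) + q := by
    have : (a:ℚ) = (q:ℚ)*b - m := by exact_mod_cast (by linarith : a = q*b - m)
    rw [this]; field_simp; ring
  rw [ha, Int.ceil_add_intCast, Int.ceil_neg, Int.floor_eq_zero_iff.2, hq,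
    Int.mul_ediv_cancel_left _ hb.ne']
  · ring
  · constructor
    · positivity
    · rw [div_lt_one (by exact_mod_cast hb)]; exact_mod_cast hmb

/-- On the semigroup `G_Y`: if `n = Σᵢ xᵢ·(P/pᵢ)` with `xᵢ ≥ 0`, then
`Δ_Y(n) = 1 + Σᵢ ⌊xᵢ/pᵢ⌋`. -/
theorem seifDelta_on_semigroup (l : ℕ) (p : Fin l → ℕ) (h2 : ∀ i, 2 ≤ p i)
    (hcop : ∀ i j, i ≠ j → Nat.Coprime (p i) (p j))
    (e0 : ℤ) (p' : Fin l → ℤ)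
    (hp' : ∀ i, 0 ≤ p' i ∧ p' i ≤ (p i : ℤ) - 1)
    (heq : e0 * ∏ i, (p i : ℤ) + ∑ i, (((∏ j, p j) / p i : ℕ) : ℤ) * p' i = -1)
    (x : Fin l → ℕ) :
    seifDelta p e0 p' (∑ i, (x i : ℤ) * (((∏ j, p j) / p i : ℕ) : ℤ)) =
      1 + ∑ i, ((x i / p i : ℕ) : ℤ) := by
  have hp0 : ∀ i, 0 < p i := fun i => lt_of_lt_of_le two_pos (h2 i)
  set P : ℕ := ∏ j, p j with hPdef
  set n : ℤ := ∑ i, (x i : ℤ) * ((P / p i : ℕ) : ℤ) with hn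
  set m : Fin l → ℤ := fun i => ((x i % p i : ℕ) : ℤ) with hm
  have hPdvd : ∀ i, p i ∣ P := fun i => Finset.dvd_prod_of_mem _ (Finset.mem_univ i)
  have hPi : ∀ i, p i * (P / p i) = P := fun i => Nat.mul_div_cancel' (hPdvd i)
  have hPpos : 0 < P := Finset.prod_pos (fun i _ => hp0 i)
  have hPc : ((P:ℕ):ℤ) = ∏ i, (p i : ℤ) := by simp only [hPdef, Nat.cast_prod]
  rw [← hPc] at heq
  have hdvdij : ∀ i j, i ≠ j → (p i : ℤ) ∣ ((P / p j : ℕ) : ℤ) := by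
    intro i j hij
    have h1 : p i ∣ (P / p j) * p j := by rw [Nat.div_mul_cancel (hPdvd j)]; exact hPdvd i
    exact_mod_cast Int.natCast_dvd_natCast.2 ((hcop i j hij).dvd_of_dvd_mul_right h1)
  have hkey1 : ∀ i, (p i : ℤ) ∣ ((P / p i : ℕ) : ℤ) * p' i + 1 := by
    intro i
    have hsplit := Finset.add_sum_erase Finset.univ
      (fun j => ((P / p j : ℕ):ℤ) * p' j) (Finset.mem_univ i)
    have hexp : ((P / p i : ℕ) : ℤ) * p' i + 1 =
        -(e0 * (P:ℤ)) - ∑ j ∈ Finset.univ.erase i, ((P / p j : ℕ):ℤ) * p' j := by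
      have : ((P / p i : ℕ):ℤ) * p' i + ∑ j ∈ Finset.univ.erase i, ((P / p j : ℕ):ℤ) * p' j
          = ∑ j, ((P / p j : ℕ):ℤ) * p' j := hsplit
      linarith [heq]
    rw [hexp]
    refine dvd_sub (dvd_neg.2 (Dvd.dvd.mul_left ?_ e0)) (Finset.dvd_sum fun j hj => ?_)
    · exact_mod_cast Int.natCast_dvd_natCast.2 (hPdvd i)
    · exact (hdvdij i j (Finset.ne_of_mem_erase hj).symm).mul_right _
  have hdm : ∀ i, ((p i:ℕ):ℤ) * ((x i / p i : ℕ):ℤ) + m i = (x i : ℤ) := by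
    intro i; simp only [hm]; exact_mod_cast Nat.div_add_mod (x i) (p i)
  have hkey2 : ∀ i, (p i : ℤ) ∣ n * p' i + m i := by
    intro i
    have hsum : n * p' i = (x i : ℤ) * ((P / p i : ℕ):ℤ) * p' i +
        ∑ j ∈ Finset.univ.erase i, (x j : ℤ) * ((P / p j : ℕ):ℤ) * p' i := by
      rw [hn, Finset.sum_mul,
        ← Finset.add_sum_erase Finset.univ (fun j => (x j : ℤ) * ((P / p j : ℕ):ℤ) * p' i)
          (Finset.mem_univ i)]
    have hexp : n * p' i + m i = (x i : ℤ) * (((P / p i : ℕ):ℤ) * p' i + 1)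
        - ((p i:ℕ):ℤ) * ((x i / p i : ℕ):ℤ)
        + ∑ j ∈ Finset.univ.erase i, (x j : ℤ) * ((P / p j : ℕ):ℤ) * p' i := by
      rw [hsum]; linear_combination hdm i
    rw [hexp]
    refine dvd_add (dvd_sub ((hkey1 i).mul_left _) (Dvd.intro _ rfl))
      (Finset.dvd_sum fun j hj => ?_)
    exact ((hdvdij i j (Finset.ne_of_mem_erase hj).symm).mul_left _).mul_right _
  have hceil : ∀ i, ⌈((n * p' i : ℤ) : ℚ) / ((p i : ℕ) : ℚ)⌉
      = (n * p' i + m i) / (p i : ℤ) := by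
    intro i
    exact ceil_aux _ _ _ (by exact_mod_cast hp0 i) (by simp only [hm]; positivity)
      (by simp only [hm]; exact_mod_cast Nat.mod_lt _ (hp0 i)) (hkey2 i)
  -- e0 < 0
  have hSnn : 0 ≤ ∑ i, ((P / p i : ℕ):ℤ) * p' i :=
    Finset.sum_nonneg fun i _ => mul_nonneg (Int.natCast_nonneg _) (hp' i).1
  have hPz : (0:ℤ) < (P:ℤ) := by exact_mod_cast hPpos
  have he0 : e0 < 0 := by nlinarith
  simp only [seifDelta, abs_of_neg he0]
  rw [Finset.sum_congr rfl (fun i _ => hceil i)]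
  set q : Fin l → ℤ := fun i => (n * p' i + m i) / (p i : ℤ) with hqdef
  have hq : ∀ i, q i * (p i : ℤ) = n * p' i + m i := fun i => Int.ediv_mul_cancel (hkey2 i)
  have expand : ∀ (f : Fin l → ℤ),
      (∑ i, f i) * (P:ℤ) = ∑ i, f i * (p i:ℤ) * ((P / p i : ℕ):ℤ) := by
    intro f
    rw [Finset.sum_mul]
    refine Finset.sum_congr rfl fun i _ => ?_
    have h : ((p i:ℕ):ℤ) * ((P / p i :ℕ):ℤ) = (P:ℤ) := by exact_mod_cast hPi i
    rw [mul_assoc, h]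
  have e1 : (∑ i, q i) * (P:ℤ) = n * (∑ i, ((P / p i : ℕ):ℤ) * p' i) + ∑ i, m i * ((P / p i : ℕ):ℤ) := by
    rw [expand, Finset.mul_sum, ← Finset.sum_add_distrib]
    refine Finset.sum_congr rfl fun i _ => ?_
    rw [hq i]; ring
  have e2 : (∑ i, ((x i / p i : ℕ):ℤ)) * (P:ℤ) = n - ∑ i, m i * ((P / p i : ℕ):ℤ) := by
    rw [expand, hn, ← Finset.sum_sub_distrib]
    refine Finset.sum_congr rfl fun i _ => ?_
    have := hdm i
    ring_nf
    nlinarith [hdm i]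
  have key : (∑ i, q i + ∑ i, ((x i / p i : ℕ):ℤ)) * (P:ℤ) = (-e0 * n) * (P:ℤ) := by
    rw [add_mul, e1, e2]; linear_combination n * heq
  have hfin := mul_right_cancel₀ hPz.ne' key
  linarith
end

section
/- With Δ_Y and N_Y as in the Seifert setup, Δ_Y(n) ≥ 0 for all n > N_Y, and for 0 ≤ n ≤ N_Y one has Δ_Y(n) ≥ 1 if and only if n ∈ G_Y. -/
/-- `Δ_Y(n) ≥ 0` for `n > N_Y`, and for `0 ≤ n ≤ N_Y`, `Δ_Y(n) ≥ 1`
iff `n` lies in the semigroup `G_Y` generated by the `P/pᵢ`. -/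
theorem seifDelta_positivity (l : ℕ) (p : Fin l → ℕ) (h2 : ∀ i, 2 ≤ p i)
    (hcop : ∀ i j, i ≠ j → Nat.Coprime (p i) (p j))
    (e0 : ℤ) (p' : Fin l → ℤ)
    (hp' : ∀ i, 0 ≤ p' i ∧ p' i ≤ (p i : ℤ) - 1)
    (heq : e0 * ∏ i, (p i : ℤ) + ∑ i, (((∏ j, p j) / p i : ℕ) : ℤ) * p' i = -1) :
    (∀ n : ℤ, seifN p < n → 0 ≤ seifDelta p e0 p' n) ∧
      (∀ n : ℤ, 0 ≤ n → n ≤ seifN p →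
        (1 ≤ seifDelta p e0 p' n ↔
          ∃ a : Fin l → ℕ, n = ∑ i, (a i : ℤ) * (((∏ j, p j) / p i : ℕ) : ℤ))) := by
  classical
  have hpos : ∀ i, 0 < p i := fun i => lt_of_lt_of_le (by norm_num) (h2 i)
  have hppos : ∀ i, (0:ℤ) < (p i : ℤ) := fun i => by exact_mod_cast hpos i
  set P : ℤ := ∏ i, (p i : ℤ) with hPdef
  set Q : Fin l → ℤ := fun i => (((∏ j, p j) / p i : ℕ) : ℤ) with hQdef
  have hQapp : ∀ i, (((∏ j, p j) / p i : ℕ) : ℤ) = Q i := fun i => by simp [hQdef]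
  have hPpos : 0 < P := Finset.prod_pos fun i _ => hppos i
  have hdvdnat : ∀ i, p i ∣ ∏ j, p j := fun i => Finset.dvd_prod_of_mem _ (Finset.mem_univ i)
  have hQmul : ∀ i, Q i * (p i : ℤ) = P := by
    intro i
    simp only [hQdef, hPdef]
    rw [← Nat.cast_prod, ← Nat.cast_mul, Nat.div_mul_cancel (hdvdnat i)]
  have hQnn : ∀ i, 0 ≤ Q i := fun i => by simp only [hQdef]; exact Int.natCast_nonneg _
  have hpdvdP : ∀ i, ((p i : ℕ):ℤ) ∣ P := fun i => ⟨Q i, by rw [← hQmul i]; ring⟩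
  have hQerase : ∀ i, (∏ j, p j) / p i = ∏ j ∈ Finset.univ.erase i, p j := by
    intro i
    exact Nat.div_eq_of_eq_mul_left (hpos i)
      (Finset.prod_erase_mul Finset.univ p (Finset.mem_univ i)).symm
  have hcopQ : ∀ i, IsCoprime ((p i : ℕ):ℤ) (Q i) := by
    intro i
    have h : Nat.Coprime (p i) ((∏ j, p j) / p i) := by
      rw [hQerase i]
      exact Nat.Coprime.prod_right fun j hj => hcop i j ((Finset.mem_erase.1 hj).1).symm
    simp only [hQdef]
    exact h.isCoprime
  have hQdvd : ∀ i j, i ≠ j → ((p i : ℕ):ℤ) ∣ Q j := by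
    intro i j hij
    have h1 : p j * p i ∣ ∏ k, p k :=
      Nat.Coprime.mul_dvd_of_dvd_of_dvd (hcop j i hij.symm) (hdvdnat j) (hdvdnat i)
    have h2' : p i ∣ (∏ k, p k) / p j := (Nat.dvd_div_iff_mul_dvd (hdvdnat j)).2 h1
    simp only [hQdef]
    exact_mod_cast h2'
  have heq' : e0 * P + ∑ i, Q i * p' i = -1 := by
    simp only [hQdef]; exact heq
  have hsum0 : 0 ≤ ∑ i, Q i * p' i :=
    Finset.sum_nonneg fun i _ => mul_nonneg (hQnn i) (hp' i).1
  have he0 : |e0| = -e0 := by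
    have h : e0 * P ≤ -1 := by linarith
    have he : e0 < 0 := by
      by_contra hc
      push_neg at hc
      nlinarith
    exact abs_of_neg he
  -- the remainders
  set r : ℤ → Fin l → ℤ := fun n i => (-(n * p' i)) % ((p i : ℕ):ℤ) with hrdef
  have hr0 : ∀ n i, 0 ≤ r n i := fun n i => Int.emod_nonneg _ (ne_of_gt (hppos i))
  have hrlt : ∀ n i, r n i < (p i : ℤ) := fun n i => Int.emod_lt_of_pos _ (hppos i)
  have hrd : ∀ n i, ((p i : ℕ):ℤ) ∣ (n * p' i + r n i) := by
    intro n i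
    refine ⟨-((-(n * p' i)) / ((p i : ℕ):ℤ)), ?_⟩
    have h := Int.mul_ediv_add_emod (-(n * p' i)) ((p i : ℕ):ℤ)
    simp only [hrdef]
    linear_combination h
  -- the ceiling computation
  have hceil : ∀ (n : ℤ) (i : Fin l),
      (⌈((n * p' i : ℤ) : ℚ) / ((p i : ℕ) : ℚ)⌉) * ((p i : ℕ):ℤ) = n * p' i + r n i := by
    intro n i
    obtain ⟨q, hq⟩ := hrd n i
    have hpQ : (0:ℚ) < ((p i : ℕ) : ℚ) := by exact_mod_cast hpos i
    have hcast : ((n * p' i : ℤ) : ℚ) = ((p i : ℕ):ℚ) * (q:ℚ) - ((r n i : ℤ):ℚ) := by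
      have h : (n * p' i : ℤ) = ((p i : ℕ):ℤ) * q - r n i := by linarith
      exact_mod_cast h
    have h0 : (0:ℚ) ≤ ((r n i : ℤ):ℚ) := by exact_mod_cast hr0 n i
    have h1 : ((r n i : ℤ):ℚ) < ((p i : ℕ):ℚ) := by exact_mod_cast hrlt n i
    have hce : ⌈((n * p' i : ℤ) : ℚ) / ((p i : ℕ) : ℚ)⌉ = q := by
      rw [Int.ceil_eq_iff]
      constructor
      · rw [lt_div_iff₀ hpQ, hcast]
        nlinarith
      · rw [div_le_iff₀ hpQ, hcast]
        nlinarith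
    rw [hce]
    linear_combination -hq
  -- the key identity
  have key : ∀ n : ℤ, P * seifDelta p e0 p' n = P + n - ∑ i, Q i * r n i := by
    intro n
    unfold seifDelta
    rw [he0]
    have h1 : P * ∑ i, ⌈((n * p' i : ℤ) : ℚ) / ((p i : ℕ) : ℚ)⌉
        = n * (∑ i, Q i * p' i) + ∑ i, Q i * r n i := by
      rw [Finset.mul_sum, Finset.mul_sum, ← Finset.sum_add_distrib]
      refine Finset.sum_congr rfl fun i _ => ?_
      linear_combination Q i * hceil n i
        - (⌈((n * p' i : ℤ) : ℚ) / ((p i : ℕ) : ℚ)⌉ : ℤ) * hQmul i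
    have hs : ∑ i, Q i * p' i = -1 - e0 * P := by linarith
    rw [mul_sub, h1, hs]
    ring
  -- single divisibility
  have hQp'1 : ∀ i, ((p i : ℕ):ℤ) ∣ (Q i * p' i + 1) := by
    intro i
    have hsplit : Q i * p' i + ∑ j ∈ Finset.univ.erase i, Q j * p' j = ∑ j, Q j * p' j :=
      Finset.add_sum_erase _ (fun j => Q j * p' j) (Finset.mem_univ i)
    have h3 : Q i * p' i + 1 = -(e0 * P) - ∑ j ∈ Finset.univ.erase i, Q j * p' j := by
      linarith
    rw [h3]
    refine dvd_sub (dvd_neg.2 ((hpdvdP i).mul_left e0)) ?_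
    exact Finset.dvd_sum fun j hj =>
      ((hQdvd i j ((Finset.mem_erase.1 hj).1).symm).mul_right _)
  have hsingle : ∀ n i, ((p i : ℕ):ℤ) ∣ (n - Q i * r n i) := by
    intro n i
    have h1 := (hQp'1 i).mul_left n
    have h2 := (hrd n i).mul_left (Q i)
    have h3 : n - Q i * r n i = n * (Q i * p' i + 1) - Q i * (n * p' i + r n i) := by ring
    rw [h3]
    exact dvd_sub h1 h2
  have hall : ∀ n, P ∣ (n - ∑ i, Q i * r n i) := by
    intro n
    rw [hPdef]
    refine Finset.prod_dvd_of_coprime ?_ fun i _ => ?_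
    · intro i _ j _ hij
      exact (hcop i j hij).isCoprime
    · have hsplit : Q i * r n i + ∑ j ∈ Finset.univ.erase i, Q j * r n j = ∑ j, Q j * r n j :=
        Finset.add_sum_erase _ (fun j => Q j * r n j) (Finset.mem_univ i)
      have h3 : n - ∑ j, Q j * r n j
          = (n - Q i * r n i) - ∑ j ∈ Finset.univ.erase i, Q j * r n j := by
        linarith
      rw [h3]
      exact dvd_sub (hsingle n i) (Finset.dvd_sum fun j hj =>
        ((hQdvd i j ((Finset.mem_erase.1 hj).1).symm).mul_right _))
  -- sum bound
  have hSbound : ∀ n, ∑ i, Q i * r n i ≤ (l:ℤ) * P - ∑ i, Q i := by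
    intro n
    have h1 : ∑ i, Q i * r n i ≤ ∑ i, (P - Q i) := by
      refine Finset.sum_le_sum fun i _ => ?_
      have h2 : Q i * r n i ≤ Q i * ((p i : ℤ) - 1) :=
        mul_le_mul_of_nonneg_left (by linarith [hrlt n i]) (hQnn i)
      have h3 := hQmul i
      nlinarith
    have h2 : ∑ i, (P - Q i) = (l:ℤ) * P - ∑ i, Q i := by
      rw [Finset.sum_sub_distrib, Finset.sum_const, Finset.card_univ, Fintype.card_fin,
        nsmul_eq_mul]
    linarith
  have hN : seifN p = P * ((l:ℤ) - 2) - ∑ i, Q i := by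
    simp only [seifN, hQdef, hPdef]
  constructor
  · -- part 1
    intro n hn
    by_contra hc
    push_neg at hc
    have hD : seifDelta p e0 p' n ≤ -1 := by omega
    have h1 : P * seifDelta p e0 p' n ≤ P * (-1) :=
      mul_le_mul_of_nonneg_left hD hPpos.le
    rw [key n] at h1
    have h3 := hSbound n
    rw [hN] at hn
    nlinarith
  · intro n hn0 hnN
    constructor
    · -- forward: delta ≥ 1 ⇒ in semigroup
      intro h1
      obtain ⟨k, hk⟩ := hall n
      have hPD : P * 1 ≤ P * seifDelta p e0 p' n :=
        mul_le_mul_of_nonneg_left h1 hPpos.le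
      rw [key n, mul_one] at hPD
      have hk0 : 0 ≤ k := by
        by_contra hkc
        push_neg at hkc
        have hk1 : k ≤ -1 := by omega
        have := mul_le_mul_of_nonneg_left hk1 hPpos.le
        linarith
      have hl : 0 < l := by
        by_contra hl0
        push_neg at hl0
        have hl' : l = 0 := by omega
        subst hl'
        rw [hN] at hnN
        simp only [hPdef] at hnN
        rw [Finset.univ_eq_empty, Finset.prod_empty, Finset.sum_empty] at hnN
        norm_num at hnN
        linarith
      set i0 : Fin l := ⟨0, hl⟩ with hi0
      refine ⟨fun i => if i = i0 then (r n i0 + k * ((p i0 : ℕ):ℤ)).toNat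
        else (r n i).toNat, ?_⟩
      simp only [hQapp]
      have hcast : ∀ i : Fin l,
          (((if i = i0 then (r n i0 + k * ((p i0 : ℕ):ℤ)).toNat else (r n i).toNat : ℕ)) : ℤ)
          = (if i = i0 then r n i0 + k * ((p i0 : ℕ):ℤ) else r n i) := by
        intro i
        split
        · exact Int.toNat_of_nonneg (add_nonneg (hr0 n i0) (mul_nonneg hk0 (hppos i0).le))
        · exact Int.toNat_of_nonneg (hr0 n i)
      have hterm : ∀ i ∈ Finset.univ,
          (((if i = i0 then (r n i0 + k * ((p i0 : ℕ):ℤ)).toNat else (r n i).toNat : ℕ)) : ℤ) * Q i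
          = Q i * r n i + (if i = i0 then k * (((p i0 : ℕ):ℤ) * Q i0) else 0) := by
        intro i _
        rw [hcast i]
        by_cases h : i = i0
        · subst h
          simp only [if_true, eq_self_iff_true, if_pos]
          ring
        · simp only [if_neg h]
          ring
      rw [Finset.sum_congr rfl hterm, Finset.sum_add_distrib,
        Fintype.sum_ite_eq' i0 (fun _ => k * (((p i0 : ℕ):ℤ) * Q i0))]
      have hP0 : ((p i0 : ℕ):ℤ) * Q i0 = P := by rw [mul_comm]; exact hQmul i0
      rw [hP0]
      linarith
    · -- backward: in semigroup ⇒ delta ≥ 1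
      rintro ⟨a, ha⟩
      simp only [hQapp] at ha
      have hle : ∀ i, r n i ≤ (a i : ℤ) := by
        intro i
        have hsplit : (a i : ℤ) * Q i + ∑ j ∈ Finset.univ.erase i, (a j : ℤ) * Q j
            = ∑ j, (a j : ℤ) * Q j :=
          Finset.add_sum_erase _ (fun j => (a j : ℤ) * Q j) (Finset.mem_univ i)
        have h2 : ((a i : ℤ) - r n i) * Q i
            = (n - Q i * r n i) - ∑ j ∈ Finset.univ.erase i, (a j : ℤ) * Q j := by
          linear_combination hsplit - ha
        have h1 : ((p i : ℕ):ℤ) ∣ ((a i : ℤ) - r n i) * Q i := by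
          rw [h2]
          exact dvd_sub (hsingle n i) (Finset.dvd_sum fun j hj =>
            ((hQdvd i j ((Finset.mem_erase.1 hj).1).symm).mul_left _))
        have h3 : ((p i : ℕ):ℤ) ∣ ((a i : ℤ) - r n i) := (hcopQ i).dvd_of_dvd_mul_right h1
        obtain ⟨t, ht⟩ := h3
        by_contra hcon
        push_neg at hcon
        have htneg : t < 0 := by nlinarith [hppos i]
        have ht1 : t ≤ -1 := by omega
        have h4 : ((p i : ℕ):ℤ) * t ≤ ((p i : ℕ):ℤ) * (-1) :=
          mul_le_mul_of_nonneg_left ht1 (hppos i).le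
        have h5 : (0:ℤ) ≤ (a i : ℤ) := Int.natCast_nonneg _
        linarith [hrlt n i]
      have hS : ∑ i, Q i * r n i ≤ n := by
        have hc : ∑ i, Q i * r n i ≤ ∑ i, (a i : ℤ) * Q i := by
          refine Finset.sum_le_sum fun i _ => ?_
          have h6 := mul_nonneg (sub_nonneg.2 (hle i)) (hQnn i)
          nlinarith
        linarith [ha ▸ hc]
      have h6 : P * 1 ≤ P * seifDelta p e0 p' n := by
        rw [key n, mul_one]
        linarith
      exact le_of_mul_le_mul_left h6 hPpos
end

section
/- With notation as in the Seifert setup, Δ_Y(n) ∈ [-(l-2), l-2] for all 0 ≤ n ≤ N_Y. -/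
/-- `Δ_Y(n) ∈ [-(l-2), l-2]` for all `0 ≤ n ≤ N_Y`. -/
theorem seifDelta_bounded (l : ℕ) (hl : 3 ≤ l) (p : Fin l → ℕ)
    (h2 : ∀ i, 2 ≤ p i)
    (hcop : ∀ i j, i ≠ j → Nat.Coprime (p i) (p j))
    (e0 : ℤ) (p' : Fin l → ℤ)
    (hp' : ∀ i, 0 ≤ p' i ∧ p' i ≤ (p i : ℤ) - 1)
    (heq : e0 * ∏ i, (p i : ℤ) + ∑ i, (((∏ j, p j) / p i : ℕ) : ℤ) * p' i = -1)
    (n : ℤ) (hn0 : 0 ≤ n) (hnN : n ≤ seifN p) :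
    -((l : ℤ) - 2) ≤ seifDelta p e0 p' n ∧ seifDelta p e0 p' n ≤ (l : ℤ) - 2 := by
  have hlpos : 0 < l := by omega
  have : Nonempty (Fin l) := ⟨⟨0, hlpos⟩⟩
  have hppos : ∀ i, 0 < p i := fun i => lt_of_lt_of_le two_pos (h2 i)
  set P : ℕ := ∏ i, p i with hPdef
  have hPpos : 0 < P := Finset.prod_pos (fun i _ => hppos i)
  have hdvd : ∀ i, p i ∣ P := fun i => Finset.dvd_prod_of_mem p (Finset.mem_univ i)
  have hdivpos : ∀ i, 0 < P / p i := fun i =>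
    Nat.div_pos (Nat.le_of_dvd hPpos (hdvd i)) (hppos i)
  have hPZ : (∏ i, (p i : ℤ)) = (P : ℤ) := by push_cast [hPdef]; ring
  rw [hPZ] at heq
  have hPQpos : (0:ℚ) < (P:ℚ) := by exact_mod_cast hPpos
  have hcast : ∀ i, ((P / p i : ℕ) : ℚ) = (P : ℚ) / (p i : ℚ) := fun i =>
    Nat.cast_div (hdvd i) (by exact_mod_cast (hppos i).ne')
  -- e0 < 0
  have hSnn : 0 ≤ ∑ i, ((P / p i : ℕ) : ℤ) * p' i :=
    Finset.sum_nonneg (fun i _ => mul_nonneg (by positivity) (hp' i).1)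
  have he0neg : e0 < 0 := by
    nlinarith [hSnn, (by exact_mod_cast hPpos : (0:ℤ) < (P:ℤ))]
  have habs : |e0| = -e0 := abs_of_neg he0neg
  set x : Fin l → ℚ := fun i => ((n * p' i : ℤ) : ℚ) / ((p i : ℕ) : ℚ) with hxdef
  -- key identity
  have heqQ : (∑ i, ((P / p i : ℕ) : ℚ) * (p' i : ℚ)) = -1 - (e0:ℚ) * (P:ℚ) := by
    have h : (∑ i, ((P / p i : ℕ) : ℤ) * p' i : ℤ) = -1 - e0 * (P:ℤ) := by linarith [heq]
    calc (∑ i, ((P / p i : ℕ) : ℚ) * (p' i : ℚ))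
        = ((∑ i, ((P / p i : ℕ) : ℤ) * p' i : ℤ) : ℚ) := by
          rw [Int.cast_sum]
          exact Finset.sum_congr rfl fun i _ => by
            rw [Int.cast_mul, Int.cast_natCast]
      _ = -1 - (e0:ℚ) * (P:ℚ) := by rw [h]; push_cast; ring
  have key : ∑ i, x i = -(n:ℚ)/(P:ℚ) - (e0:ℚ)*(n:ℚ) := by
    have hterm : ∀ i, x i = (n:ℚ) * (((P / p i : ℕ) : ℚ) * (p' i : ℚ)) / (P:ℚ) := by
      intro i
      have hpi : ((p i : ℕ):ℚ) ≠ 0 := by exact_mod_cast (hppos i).ne'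
      rw [hxdef]
      simp only [hcast i]
      push_cast
      field_simp
    calc ∑ i, x i = ∑ i, (n:ℚ) * (((P / p i : ℕ) : ℚ) * (p' i : ℚ)) / (P:ℚ) := by
          exact Finset.sum_congr rfl fun i _ => hterm i
      _ = (n:ℚ) * (∑ i, ((P / p i : ℕ) : ℚ) * (p' i : ℚ)) / (P:ℚ) := by
          rw [Finset.mul_sum, Finset.sum_div]
      _ = -(n:ℚ)/(P:ℚ) - (e0:ℚ)*(n:ℚ) := by
          rw [heqQ]; field_simp
  -- ceiling bounds
  have hceil_low : ∑ i, x i ≤ ∑ i, ((⌈x i⌉ : ℤ) : ℚ) :=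
    Finset.sum_le_sum fun i _ => Int.le_ceil _
  have hceil_high : ∑ i, ((⌈x i⌉ : ℤ) : ℚ) < ∑ i, x i + (l:ℚ) := by
    calc ∑ i, ((⌈x i⌉ : ℤ) : ℚ) < ∑ i, (x i + 1) :=
          Finset.sum_lt_sum_of_nonempty Finset.univ_nonempty fun i _ => Int.ceil_lt_add_one _
      _ = ∑ i, x i + (l:ℚ) := by
          rw [Finset.sum_add_distrib, Finset.sum_const, Finset.card_univ, Fintype.card_fin]
          push_cast; ring
  -- Delta cast to ℚ
  have hDelta : ((seifDelta p e0 p' n : ℤ) : ℚ)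
      = 1 + (n:ℚ)/(P:ℚ) + (∑ i, x i - ∑ i, ((⌈x i⌉ : ℤ) : ℚ)) := by
    unfold seifDelta
    rw [habs]
    push_cast
    rw [show (∑ i, (⌈((n:ℚ) * (p' i:ℚ)) / ((p i : ℕ) : ℚ)⌉ : ℚ)) = ∑ i, ((⌈x i⌉ : ℤ) : ℚ) from
      Finset.sum_congr rfl fun i _ => by rw [hxdef]; push_cast; ring_nf]
    rw [key]; ring
  -- upper bound
  have hnP : (n:ℚ) < ((l:ℚ) - 2) * (P:ℚ) := by
    have hS : (l:ℤ) ≤ ∑ i, ((P / p i : ℕ) : ℤ) := by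
      calc (l:ℤ) = ∑ _i : Fin l, (1:ℤ) := by simp
        _ ≤ ∑ i, ((P / p i : ℕ) : ℤ) :=
          Finset.sum_le_sum fun i _ => by exact_mod_cast hdivpos i
    have hnN' : n ≤ (P:ℤ) * ((l:ℤ) - 2) - ∑ i, ((P / p i : ℕ) : ℤ) := by
      rw [seifN, hPZ] at hnN; exact hnN
    have : n < (P:ℤ) * ((l:ℤ) - 2) := by omega
    have : ((n:ℤ):ℚ) < (((P:ℤ) * ((l:ℤ) - 2) : ℤ):ℚ) := by exact_mod_cast this
    push_cast at this ⊢
    linarith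
  have hup : seifDelta p e0 p' n ≤ (l:ℤ) - 2 := by
    have h1 : ((seifDelta p e0 p' n : ℤ) : ℚ) < ((l:ℚ) - 1) := by
      rw [hDelta]
      have h2 : (n:ℚ)/(P:ℚ) < (l:ℚ) - 2 := (div_lt_iff₀ hPQpos).mpr hnP
      linarith
    have : ((seifDelta p e0 p' n : ℤ) : ℚ) < (((l:ℤ) - 1 : ℤ) : ℚ) := by push_cast; linarith
    have : seifDelta p e0 p' n < (l:ℤ) - 1 := by exact_mod_cast this
    omega
  have hlow : -((l:ℤ) - 2) ≤ seifDelta p e0 p' n := by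
    have hn0Q : (0:ℚ) ≤ (n:ℚ)/(P:ℚ) := by positivity
    have h1 : ((1:ℚ) - (l:ℚ)) < ((seifDelta p e0 p' n : ℤ) : ℚ) := by
      rw [hDelta]; linarith
    have : (((1:ℤ) - (l:ℤ) : ℤ) : ℚ) < ((seifDelta p e0 p' n : ℤ) : ℚ) := by push_cast; linarith
    have : (1:ℤ) - (l:ℤ) < seifDelta p e0 p' n := by exact_mod_cast this
    omega
  exact ⟨hlow, hup⟩
end

section
/- N_Y = p₁⋯p_l((l-2) - Σᵢ 1/pᵢ) is a positive integer whenever p₁,...,p_l are pairwise coprime integers ≥ 2 with l ≥ 3, except when l = 3 and {p₁,p₂,p₃} = {2,3,5}. -/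
/-- Finite check for `l = 3` with all multiplicities at most 6. -/
lemma seifN_aux_nat (a b c : ℕ) (ha : 2 ≤ a) (ha6 : a ≤ 6) (hb : 2 ≤ b) (hb6 : b ≤ 6)
    (hc : 2 ≤ c) (hc6 : c ≤ 6)
    (hab : Nat.Coprime a b) (hac : Nat.Coprime a c) (hbc : Nat.Coprime b c)
    (h : ({a,b,c} : Multiset ℕ) ≠ {2,3,5}) : b*c + (a*c + a*b) < a*b*c := by
  interval_cases a <;> interval_cases b <;> interval_cases c <;>
    revert hab hac hbc h <;> decide

/-- Counting bound: if at most one multiplicity in `s` equals `2`, then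
`∑ 1/pᵢ ≤ |s|/3 + 1/6`. -/
lemma seifN_sum_inv_le {l : ℕ} (p : Fin l → ℕ) (h2 : ∀ i, 2 ≤ p i) (s : Finset (Fin l))
    (h1 : ∀ i ∈ s, ∀ j ∈ s, p i = 2 → p j = 2 → i = j) :
    ∑ i ∈ s, ((p i : ℚ))⁻¹ ≤ s.card / 3 + 1/6 := by
  classical
  set A := s.filter (fun i => p i = 2) with hAdef
  set B := s.filter (fun i => ¬ p i = 2) with hBdef
  have hAcard : A.card ≤ 1 := by
    apply Finset.card_le_one.2
    intro i hi j hj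
    simp only [hAdef, Finset.mem_filter] at hi hj
    exact h1 i hi.1 j hj.1 hi.2 hj.2
  have hcards : A.card + B.card = s.card :=
    Finset.card_filter_add_card_filter_not _
  have hsplit : ∑ i ∈ s, ((p i : ℚ))⁻¹ = ∑ i ∈ A, ((p i : ℚ))⁻¹ + ∑ i ∈ B, ((p i : ℚ))⁻¹ :=
    (Finset.sum_filter_add_sum_filter_not s _ _).symm
  have hAsum : ∑ i ∈ A, ((p i : ℚ))⁻¹ ≤ (A.card : ℚ) / 2 := by
    have : ∑ i ∈ A, ((p i : ℚ))⁻¹ = ∑ _i ∈ A, (1/2 : ℚ) := by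
      apply Finset.sum_congr rfl
      intro i hi
      have : p i = 2 := (Finset.mem_filter.1 hi).2
      rw [this]; norm_num
    rw [this, Finset.sum_const, nsmul_eq_mul]; ring_nf; linarith []
  have hBsum : ∑ i ∈ B, ((p i : ℚ))⁻¹ ≤ (B.card : ℚ) / 3 := by
    have h3 : ∀ i ∈ B, ((p i : ℚ))⁻¹ ≤ 1/3 := by
      intro i hi
      have hne : p i ≠ 2 := (Finset.mem_filter.1 hi).2
      have h3 : 3 ≤ p i := by have := h2 i; omega
      rw [inv_eq_one_div]
      apply one_div_le_one_div_of_le (by norm_num)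
      exact_mod_cast h3
    calc ∑ i ∈ B, ((p i : ℚ))⁻¹ ≤ ∑ _i ∈ B, (1/3 : ℚ) := Finset.sum_le_sum h3
      _ = (B.card : ℚ) / 3 := by rw [Finset.sum_const, nsmul_eq_mul]; ring
  have hq : (A.card : ℚ) + B.card = s.card := by exact_mod_cast hcards
  have hq1 : (A.card : ℚ) ≤ 1 := by exact_mod_cast hAcard
  linarith

/-- `N_Y` is positive for pairwise coprime multiplicities `pᵢ ≥ 2`, `l ≥ 3`,
except when `l = 3` and `{p₁,p₂,p₃} = {2,3,5}`. -/
theorem seifN_pos (l : ℕ) (hl : 3 ≤ l) (p : Fin l → ℕ) (h2 : ∀ i, 2 ≤ p i)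
    (hcop : ∀ i j, i ≠ j → Nat.Coprime (p i) (p j))
    (hexc : ¬ (l = 3 ∧ Multiset.map p Finset.univ.val = ({2, 3, 5} : Multiset ℕ))) :
    0 < seifN p := by
  classical
  have hpos : ∀ i, (0:ℚ) < (p i : ℚ) := fun i => by
    have := h2 i; exact_mod_cast (by omega : 0 < p i)
  have hPpos : (0:ℚ) < ∏ i, (p i : ℚ) := Finset.prod_pos (fun i _ => hpos i)
  have hone : ∀ i j, p i = 2 → p j = 2 → i = j := by
    intro i j hi hj
    by_contra hne
    have := hcop i j hne
    rw [hi, hj] at this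
    simp [Nat.Coprime] at this
  -- The key inequality on reciprocals.
  have key : ∑ i, ((p i : ℚ))⁻¹ < (l : ℚ) - 2 := by
    rcases (by omega : l = 3 ∨ 4 ≤ l) with h3 | h4
    · subst h3
      by_cases hbig : ∃ i, 7 ≤ p i
      · obtain ⟨i₀, hi₀⟩ := hbig
        have hsum : ((p i₀ : ℚ))⁻¹ + ∑ i ∈ Finset.univ.erase i₀, ((p i : ℚ))⁻¹
            = ∑ i, ((p i : ℚ))⁻¹ :=
          Finset.add_sum_erase Finset.univ (fun i => ((p i : ℚ))⁻¹) (Finset.mem_univ i₀)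
        have h17 : ((p i₀ : ℚ))⁻¹ ≤ 1/7 := by
          rw [inv_eq_one_div]
          apply one_div_le_one_div_of_le (by norm_num)
          exact_mod_cast hi₀
        have hrest : ∑ i ∈ Finset.univ.erase i₀, ((p i : ℚ))⁻¹
            ≤ ((Finset.univ.erase i₀).card : ℚ) / 3 + 1/6 :=
          seifN_sum_inv_le p h2 _ (fun i _ j _ hi hj => hone i j hi hj)
        have hcard : (Finset.univ.erase i₀).card = 2 := by
          rw [Finset.card_erase_of_mem (Finset.mem_univ i₀)]
          simp
        rw [hcard] at hrest
        rw [← hsum]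
        push_cast
        linarith
      · push_neg at hbig
        have hb : ∀ i, p i ≤ 6 := fun i => by have := hbig i; omega
        have hm : ({p 0, p 1, p 2} : Multiset ℕ) ≠ {2,3,5} := by
          intro h
          exact hexc ⟨rfl, h⟩
        have hnat := seifN_aux_nat (p 0) (p 1) (p 2) (h2 0) (hb 0) (h2 1) (hb 1)
          (h2 2) (hb 2) (hcop 0 1 (by decide)) (hcop 0 2 (by decide))
          (hcop 1 2 (by decide)) hm
        have hq : ((p 1 : ℚ) * p 2 + ((p 0 : ℚ) * p 2 + (p 0 : ℚ) * p 1))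
            < (p 0 : ℚ) * p 1 * p 2 := by exact_mod_cast hnat
        rw [Fin.sum_univ_three]
        have h0 := hpos 0; have h1 := hpos 1; have h2' := hpos 2
        have heq : ((p 0 : ℚ))⁻¹ + ((p 1 : ℚ))⁻¹ + ((p 2 : ℚ))⁻¹
            = ((p 1 : ℚ) * p 2 + ((p 0 : ℚ) * p 2 + (p 0 : ℚ) * p 1))
              / ((p 0 : ℚ) * p 1 * p 2) := by
          field_simp
          ring
        rw [heq]
        have : ((3:ℕ) : ℚ) - 2 = 1 := by norm_num
        rw [this, div_lt_one (by positivity)]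
        exact hq
    · have hall := seifN_sum_inv_le p h2 Finset.univ
        (fun i _ j _ hi hj => hone i j hi hj)
      have hcard : (Finset.univ : Finset (Fin l)).card = l := by simp
      rw [hcard] at hall
      have hl4 : (4:ℚ) ≤ (l : ℚ) := by exact_mod_cast h4
      linarith
  -- Cast `seifN` to `ℚ`.
  have hdvd : ∀ i : Fin l, p i ∣ ∏ j, p j := fun i =>
    Finset.dvd_prod_of_mem p (Finset.mem_univ i)
  have hcast : ((seifN p : ℤ) : ℚ)
      = (∏ i, (p i : ℚ)) * (((l : ℚ) - 2) - ∑ i, ((p i : ℚ))⁻¹) := by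
    unfold seifN
    rw [Int.cast_sub, Int.cast_mul, Int.cast_sum]
    simp only [Int.cast_natCast, Int.cast_prod, Int.cast_sub, Int.cast_ofNat]
    have hterm : ∀ i : Fin l, (((∏ j, p j) / p i : ℕ) : ℚ)
        = (∏ j, (p j : ℚ)) * ((p i : ℚ))⁻¹ := by
      intro i
      rw [Nat.cast_div (hdvd i) (by exact_mod_cast (hpos i).ne')]
      rw [div_eq_mul_inv]
      push_cast
      ring
    rw [Finset.sum_congr rfl (fun i _ => hterm i), ← Finset.mul_sum]
    ring
  have : (0:ℚ) < ((seifN p : ℤ) : ℚ) := by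
    rw [hcast]
    exact mul_pos hPpos (by linarith)
  exact_mod_cast this
end

section
/- Let (X, Δ) be an abstract delta sequence, (X₁, Δ₁) a delta subsequence with complementary delta subsequence (X₂, Δ₂). Then min τ ≥ min τ₁ + min τ₂ + Σ_{y ∈ Q∖(Q₁∪Q₂)} Δ(y), where τ, τ₁, τ₂ are the partial-sum functions and Q, Q₁, Q₂ the sets of points with negative delta value. -/
open Finset

/-- The minimum of the partial-sum function `τ(z) = Σ_{w < z} Δ(w)` over
`X⁺ = X ∪ {top}` (the value at the top element is the full sum). -/
def minTau {α : Type*} [LinearOrder α] [DecidableEq α]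
    (X : Finset α) (Δ : α → ℤ) : ℤ :=
  ((X.image fun z => ∑ w ∈ X.filter (· < z), Δ w) ∪ {∑ w ∈ X, Δ w}).min'
    ⟨_, Finset.mem_union_right _ (Finset.mem_singleton_self _)⟩

lemma minTau_le_sum {α : Type*} [LinearOrder α] [DecidableEq α]
    (X : Finset α) (Δ : α → ℤ) : minTau X Δ ≤ ∑ w ∈ X, Δ w :=
  Finset.min'_le _ _ (Finset.mem_union_right _ (Finset.mem_singleton_self _))

lemma minTau_le_tau {α : Type*} [LinearOrder α] [DecidableEq α]
    (X : Finset α) (Δ : α → ℤ) (z : α) :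
    minTau X Δ ≤ ∑ w ∈ X.filter (· < z), Δ w := by
  by_cases h : (X.filter (fun w => z ≤ w)).Nonempty
  · set z' := (X.filter (fun w => z ≤ w)).min' h with hz'def
    have hz'mem := Finset.min'_mem _ h
    rw [Finset.mem_filter] at hz'mem
    have heq : X.filter (· < z) = X.filter (· < z') := by
      ext w
      simp only [Finset.mem_filter]
      constructor
      · rintro ⟨hw, hlt⟩
        exact ⟨hw, lt_of_lt_of_le hlt hz'mem.2⟩
      · rintro ⟨hw, hlt⟩
        refine ⟨hw, ?_⟩
        by_contra hc
        push_neg at hc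
        have : z' ≤ w := Finset.min'_le _ w (Finset.mem_filter.mpr ⟨hw, hc⟩)
        exact absurd hlt (not_lt.mpr this)
    rw [heq]
    exact Finset.min'_le _ _ (Finset.mem_union_left _
      (Finset.mem_image_of_mem _ hz'mem.1))
  · have : X.filter (· < z) = X := by
      ext w
      simp only [Finset.mem_filter, and_iff_left_iff_imp]
      intro hw
      by_contra hc
      push_neg at hc
      exact h ⟨w, Finset.mem_filter.mpr ⟨hw, hc⟩⟩
    rw [this]
    exact minTau_le_sum X Δ

lemma sum_filter_split {α : Type*} [DecidableEq α]
    (s t : Finset α) (hst : s ⊆ t) (p : α → Prop) [DecidablePred p] (f : α → ℤ) :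
    ∑ w ∈ t.filter p, f w = ∑ w ∈ s.filter p, f w + ∑ w ∈ (t \ s).filter p, f w := by
  have hset : t.filter p \ s.filter p = (t \ s).filter p := by
    ext w
    simp only [Finset.mem_sdiff, Finset.mem_filter]
    tauto
  have := Finset.sum_sdiff (f := f) (Finset.filter_subset_filter p hst)
  rw [hset] at this
  omega

/-- For a delta subsequence `(X₁, Δ)` of `(X, Δ)` with complementary delta
subsequence `X₂`, one has
`min τ ≥ min τ₁ + min τ₂ + Σ_{y ∈ Q \ (Q₁ ∪ Q₂)} Δ(y)`. -/
theorem minTau_complementary {α : Type*} [LinearOrder α] [DecidableEq α]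
    (X : Finset α) (Δ : α → ℤ) (hX : X.Nonempty)
    (hnz : ∀ z ∈ X, Δ z ≠ 0) (hmin : 0 < Δ (X.min' hX))
    (X₁ : Finset α) (hsub : X₁ ⊆ X) (hX₁ : X₁.Nonempty)
    (hmin₁ : 0 < Δ (X₁.min' hX₁))
    (X₂ : Finset α)
    (hX₂ : X₂ = (X \ X₁).filter
      (fun z => 0 < Δ z ∨ ∃ x ∈ X \ X₁, 0 < Δ x ∧ x < z))
    (Q Q₁ Q₂ : Finset α)
    (hQ : Q = X.filter (fun y => Δ y < 0))
    (hQ₁ : Q₁ = X₁.filter (fun y => Δ y < 0))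
    (hQ₂ : Q₂ = X₂.filter (fun y => Δ y < 0)) :
    minTau X₁ Δ + minTau X₂ Δ + ∑ y ∈ Q \ (Q₁ ∪ Q₂), Δ y ≤ minTau X Δ := by
  have hsub₂ : X₂ ⊆ X \ X₁ := hX₂ ▸ Finset.filter_subset _ _
  set R : Finset α := (X \ X₁) \ X₂ with hRdef
  have hRneg : ∀ y ∈ R, Δ y < 0 := by
    intro y hy
    rw [hRdef, Finset.mem_sdiff] at hy
    obtain ⟨hy1, hy2⟩ := hy
    rw [hX₂, Finset.mem_filter] at hy2
    push_neg at hy2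
    have h3 := hy2 hy1
    have hne := hnz y (Finset.mem_sdiff.mp hy1).1
    omega
  have hQR : Q \ (Q₁ ∪ Q₂) = R := by
    ext y
    simp only [hQ, hQ₁, hQ₂, hRdef, Finset.mem_sdiff, Finset.mem_union,
      Finset.mem_filter, not_or, not_and]
    constructor
    · rintro ⟨⟨hyX, hneg⟩, h1, h2⟩
      exact ⟨⟨hyX, fun h => h1 h hneg⟩, fun h => h2 h hneg⟩
    · rintro ⟨⟨hyX, hy1⟩, hy2⟩
      have hneg : Δ y < 0 := hRneg y (by
        rw [hRdef, Finset.mem_sdiff]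
        exact ⟨Finset.mem_sdiff.mpr ⟨hyX, hy1⟩, hy2⟩)
      exact ⟨⟨hyX, hneg⟩, fun h => absurd h hy1, fun h => absurd h hy2⟩
  rw [hQR]
  apply Finset.le_min'
  intro t ht
  rcases Finset.mem_union.mp ht with h | h
  · obtain ⟨z, hz, rfl⟩ := Finset.mem_image.mp h
    have h1 := sum_filter_split X₁ X hsub (· < z) Δ
    have h2 := sum_filter_split X₂ (X \ X₁) hsub₂ (· < z) Δ
    rw [← hRdef] at h2
    have a1 := minTau_le_tau X₁ Δ z
    have a2 := minTau_le_tau X₂ Δ z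
    have a3 : ∑ w ∈ R, Δ w ≤ ∑ w ∈ R.filter (· < z), Δ w := by
      have hsplit := Finset.sum_filter_add_sum_filter_not R (· < z) Δ
      have : ∑ w ∈ R.filter (fun w => ¬ w < z), Δ w ≤ 0 :=
        Finset.sum_nonpos fun w hw =>
          le_of_lt (hRneg w (Finset.mem_filter.mp hw).1)
      omega
    omega
  · rw [Finset.mem_singleton.mp h]
    have h1 := Finset.sum_sdiff (f := Δ) hsub
    have h2 := Finset.sum_sdiff (f := Δ) hsub₂
    rw [← hRdef] at h2
    have a1 := minTau_le_sum X₁ Δ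
    have a2 := minTau_le_sum X₂ Δ
    omega
end

section
/- Let Y = Σ(p₁,...,p_l) and Y' = Σ(p₁,...,p_{l-1}, n p_l) with n coprime to p₁,...,p_{l-1}. For 0 ≤ k ≤ n-1, the map φ_k(z) = nz + k·p₁⋯p_{l-1} sends G_Y into G_{Y'}, sends [0, N_Y] ∩ G_Y into [0, N_{Y'}] ∩ G_{Y'}, and satisfies Δ_{Y'}(φ_k(x)) = Δ_Y(x) for all x ∈ G_Y ∩ [0, N_Y]. -/
/-- Membership in the numerical semigroup generated by the `P/pᵢ`, `P = ∏ pᵢ`. -/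
def inG {l : ℕ} (p : Fin l → ℕ) (m : ℕ) : Prop :=
  ∃ a : Fin l → ℕ, m = ∑ i, a i * ((∏ j, p j) / p i)

/-- The value `Δ_Y(m) = 1 + k` for `m ∈ G_Y`, where `k` is the largest
integer with `m - k·P ∈ G_Y`; equivalently `1 + Σ ⌊aᵢ/pᵢ⌋` for a
representation `m = Σ aᵢ (P/pᵢ)`. -/
noncomputable def GDelta {l : ℕ} (p : Fin l → ℕ) (m : ℕ) : ℕ :=
  1 + @Nat.findGreatest
    (fun k => ∃ a : Fin l → ℕ,
      m = k * (∏ j, p j) + ∑ i, a i * ((∏ j, p j) / p i))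
    (Classical.decPred _) m

lemma findGreatest_congr {P1 P2 : ℕ → Prop} [DecidablePred P1] [DecidablePred P2]
    {b1 b2 : ℕ} (h : ∀ t, P1 t ↔ P2 t) (h1 : ∀ t, P1 t → t ≤ b1)
    (h2 : ∀ t, P2 t → t ≤ b2) (h0 : P1 0) :
    Nat.findGreatest P1 b1 = Nat.findGreatest P2 b2 := by
  have s1 : P1 (Nat.findGreatest P1 b1) := Nat.findGreatest_spec (Nat.zero_le _) h0
  have s2 : P2 (Nat.findGreatest P2 b2) :=
    Nat.findGreatest_spec (Nat.zero_le _) ((h 0).mp h0)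
  exact le_antisymm
    (Nat.le_findGreatest (h2 _ ((h _).mp s1)) ((h _).mp s1))
    (Nat.le_findGreatest (h1 _ ((h _).mpr s2)) ((h _).mpr s2))

/-- The maps `φ_k(z) = nz + k·p₁⋯p_{l-1}`, for `0 ≤ k ≤ n-1`, send `G_Y` into
`G_{Y'}`, send `[0, N_Y] ∩ G_Y` into `[0, N_{Y'}] ∩ G_{Y'}`, and preserve the
delta function, where `Y = Σ(p₁,…,p_l)`, `Y' = Σ(p₁,…,p_{l-1}, n p_l)`. -/
theorem branched_cover_embedding (l : ℕ) (p : Fin (l + 1) → ℕ)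
    (h2 : ∀ i, 2 ≤ p i)
    (hcop : ∀ i j, i ≠ j → Nat.Coprime (p i) (p j))
    (n : ℕ) (hn : 1 ≤ n)
    (hncop : ∀ i, i ≠ Fin.last l → Nat.Coprime n (p i))
    (q : Fin (l + 1) → ℕ)
    (hq : q = fun i => if i = Fin.last l then n * p i else p i)
    (k : ℕ) (hk : k < n) :
    (∀ z : ℕ, inG p z →
        inG q (n * z + k * ((∏ j, p j) / p (Fin.last l)))) ∧
      (∀ z : ℕ, inG p z → (z : ℤ) ≤ seifN p →
        ((n * z + k * ((∏ j, p j) / p (Fin.last l)) : ℕ) : ℤ) ≤ seifN q) ∧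
      (∀ z : ℕ, inG p z → (z : ℤ) ≤ seifN p →
        GDelta q (n * z + k * ((∏ j, p j) / p (Fin.last l))) = GDelta p z) := by
  have hL : ∀ i : Fin l, Fin.castSucc i ≠ Fin.last l := fun i => (Fin.castSucc_lt_last i).ne
  have hpos : ∀ i, 0 < p i := fun i => lt_of_lt_of_le two_pos (h2 i)
  have hql : q (Fin.last l) = n * p (Fin.last l) := by rw [hq]; simp
  have hqc : ∀ i : Fin l, q (Fin.castSucc i) = p (Fin.castSucc i) := by
    intro i; rw [hq]; simp [hL i]
  set L := Fin.last l with hLdef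
  set P := ∏ j, p j with hP
  set Q := ∏ j, q j with hQdef
  set M := ∏ j ∈ Finset.univ.erase L, p j with hM
  have hPML : P = p L * M := by
    rw [hP, hM, Finset.mul_prod_erase _ _ (Finset.mem_univ L)]
  have hdivL : P / p L = M := by rw [hPML, Nat.mul_div_cancel_left _ (hpos L)]
  have hdivp : ∀ i, P / p i = ∏ j ∈ Finset.univ.erase i, p j := by
    intro i
    rw [hP, ← Finset.mul_prod_erase _ _ (Finset.mem_univ i),
      Nat.mul_div_cancel_left _ (hpos i)]
  have heraseq : ∏ j ∈ Finset.univ.erase L, q j = M := by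
    rw [hM]
    exact Finset.prod_congr rfl fun j hj => by
      rw [hq]; simp [(Finset.mem_erase.mp hj).1]
  have hQL : Q = q L * M := by
    rw [hQdef, ← Finset.mul_prod_erase _ _ (Finset.mem_univ L), heraseq]
  have hQn : Q = n * P := by rw [hQL, hql, hPML]; ring
  have hdivqL : Q / q L = M := by
    rw [hQL, Nat.mul_div_cancel_left _ (by rw [hql]; exact Nat.mul_pos hn (hpos L))]
  have hdivqc : ∀ i : Fin l, Q / q (Fin.castSucc i) = n * (P / p (Fin.castSucc i)) := by
    intro i
    have hLmem : L ∈ Finset.univ.erase (Fin.castSucc i) :=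
      Finset.mem_erase.mpr ⟨(hL i).symm, Finset.mem_univ _⟩
    have h3 : ∏ j ∈ (Finset.univ.erase (Fin.castSucc i)).erase L, q j
        = ∏ j ∈ (Finset.univ.erase (Fin.castSucc i)).erase L, p j :=
      Finset.prod_congr rfl fun j hj => by
        rw [hq]; simp [(Finset.mem_erase.mp hj).1]
    have h1 : Q = q (Fin.castSucc i) * ∏ j ∈ Finset.univ.erase (Fin.castSucc i), q j :=
      (Finset.mul_prod_erase _ _ (Finset.mem_univ _)).symm
    have h2' : ∏ j ∈ Finset.univ.erase (Fin.castSucc i), q j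
        = q L * ∏ j ∈ (Finset.univ.erase (Fin.castSucc i)).erase L, q j :=
      (Finset.mul_prod_erase _ _ hLmem).symm
    have h4 : ∏ j ∈ Finset.univ.erase (Fin.castSucc i), p j
        = p L * ∏ j ∈ (Finset.univ.erase (Fin.castSucc i)).erase L, p j :=
      (Finset.mul_prod_erase _ _ hLmem).symm
    rw [h1, h2', h3, hql, hqc i, Nat.mul_div_cancel_left _ (hpos _), hdivp, h4]
    ring
  have hcopM : Nat.Coprime n M := by
    rw [hM]
    exact Nat.Coprime.prod_right fun j hj => hncop j (Finset.mem_erase.mp hj).1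
  have hP1 : 0 < P := by rw [hP]; exact Finset.prod_pos fun i _ => hpos i
  -- The key equivalence
  have key : ∀ (t z : ℕ),
      (∃ a : Fin (l + 1) → ℕ, z = t * P + ∑ i, a i * (P / p i)) ↔
      (∃ b : Fin (l + 1) → ℕ,
        n * z + k * (P / p L) = t * Q + ∑ i, b i * (Q / q i)) := by
    intro t z
    constructor
    · rintro ⟨a, rfl⟩
      refine ⟨fun i => if i = L then n * a i + k else a i, ?_⟩
      have hsum : ∑ i : Fin l,
          (if Fin.castSucc i = L then n * a (Fin.castSucc i) + k else a (Fin.castSucc i))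
            * (Q / q (Fin.castSucc i))
          = n * ∑ i : Fin l, a (Fin.castSucc i) * (P / p (Fin.castSucc i)) := by
        rw [Finset.mul_sum]
        refine Finset.sum_congr rfl fun i _ => ?_
        rw [if_neg (hL i), hdivqc i]; ring
      rw [Fin.sum_univ_castSucc (f := fun i => (if i = L then n * a i + k else a i) * (Q / q i)),
        Fin.sum_univ_castSucc (f := fun i => a i * (P / p i))]
      rw [if_pos rfl, hdivqL, hdivL, hsum, hQn]
      ring
    · rintro ⟨b, hb⟩
      rw [Fin.sum_univ_castSucc (f := fun i => b i * (Q / q i)), hdivqL, hdivL] at hb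
      have hS : ∑ i : Fin l, b (Fin.castSucc i) * (Q / q (Fin.castSucc i))
          = n * ∑ i : Fin l, b (Fin.castSucc i) * (P / p (Fin.castSucc i)) := by
        rw [Finset.mul_sum]
        exact Finset.sum_congr rfl fun i _ => by rw [hdivqc i]; ring
      rw [hS] at hb
      set S := ∑ i : Fin l, b (Fin.castSucc i) * (P / p (Fin.castSucc i)) with hSdef
      have hb' : n * z + k * M = n * (t * P + S) + b L * M := by rw [hb, hQn]; ring
      have e3 : k * M + n * z = b L * M + n * (t * P + S) := by omega
      have hmodM : k * M % n = b L * M % n := by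
        conv_lhs => rw [← Nat.add_mul_mod_self_left (k * M) n z]
        conv_rhs => rw [← Nat.add_mul_mod_self_left (b L * M) n (t * P + S)]
        rw [e3]
      have hmn : k ≡ b L [MOD n] := Nat.ModEq.cancel_right_of_coprime hcopM hmodM
      have hkbl : b L % n = k := by
        have h5 : k % n = b L % n := hmn
        rw [Nat.mod_eq_of_lt hk] at h5
        exact h5.symm
      set c := b L / n with hc
      have hbL : b L = n * c + k := by
        rw [hc, ← hkbl]
        exact (Nat.div_add_mod (b L) n).symm
      have hz : n * z + k * M = n * (t * P + S + c * M) + k * M := by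
        rw [hb', hbL]; ring
      have hz2 : z = t * P + S + c * M := by
        have h6 : n * z = n * (t * P + S + c * M) := by omega
        exact Nat.eq_of_mul_eq_mul_left hn h6
      refine ⟨fun i => if i = L then c else b i, ?_⟩
      rw [Fin.sum_univ_castSucc (f := fun i => (if i = L then c else b i) * (P / p i)),
        if_pos rfl, hdivL]
      have h7 : ∑ i : Fin l,
          (if Fin.castSucc i = L then c else b (Fin.castSucc i)) * (P / p (Fin.castSucc i)) = S :=
        Finset.sum_congr rfl fun i _ => by rw [if_neg (hL i)]
      rw [h7]
      omega
  refine ⟨?_, ?_, ?_⟩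
  · rintro z ⟨a, ha⟩
    obtain ⟨b, hbb⟩ := (key 0 z).mp ⟨a, by simpa using ha⟩
    exact ⟨b, by simpa using hbb⟩
  · intro z hzG hzN
    have hsumQ : (∑ i, Q / q i) + n * M = n * (∑ i, P / p i) + M := by
      rw [Fin.sum_univ_castSucc (f := fun i => Q / q i),
        Fin.sum_univ_castSucc (f := fun i => P / p i), hdivqL, hdivL]
      have h1 : ∑ i : Fin l, Q / q (Fin.castSucc i)
          = n * ∑ i : Fin l, P / p (Fin.castSucc i) := by
        rw [Finset.mul_sum]
        exact Finset.sum_congr rfl fun i _ => hdivqc i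
      rw [h1]; ring
    have hNq : seifN q = (n : ℤ) * seifN p + ((n : ℤ) - 1) * (M : ℤ) := by
      unfold seifN
      simp only [← hQdef, ← hP]
      have e1 : (∏ i, (q i : ℤ)) = (n : ℤ) * (P : ℤ) := by
        rw [← Nat.cast_prod, ← hQdef, hQn]; push_cast; ring
      have e1' : (∏ i, (p i : ℤ)) = ((P : ℕ) : ℤ) := by rw [← Nat.cast_prod, ← hP]
      have e2 : (∑ i, ((Q / q i : ℕ) : ℤ)) + (n : ℤ) * (M : ℤ)
          = (n : ℤ) * (∑ i, ((P / p i : ℕ) : ℤ)) + (M : ℤ) := by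
        have h9 := congrArg (fun x : ℕ => (x : ℤ)) hsumQ
        simpa [Nat.cast_sum, Nat.cast_add, Nat.cast_mul] using h9
      rw [e1, e1']
      linear_combination -e2
    have hM0 : (0 : ℤ) ≤ (M : ℤ) := by positivity
    have hkn : (k : ℤ) ≤ (n : ℤ) - 1 := by
      have : (k : ℤ) + 1 ≤ (n : ℤ) := by exact_mod_cast hk
      linarith
    have h1 : (n : ℤ) * (z : ℤ) ≤ (n : ℤ) * seifN p :=
      mul_le_mul_of_nonneg_left hzN (by positivity)
    have h2' : (k : ℤ) * M ≤ ((n : ℤ) - 1) * M := mul_le_mul_of_nonneg_right hkn hM0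
    rw [hdivL, hNq]
    push_cast
    linarith
  · intro z hzG _
    obtain ⟨a0, ha0⟩ := hzG
    have hQ1 : 0 < Q := by rw [hQn]; exact Nat.mul_pos hn hP1
    unfold GDelta
    congr 1
    simp only [← hQdef, ← hP]
    have hb1 : ∀ t, (∃ b : Fin (l + 1) → ℕ,
        n * z + k * (P / p L) = t * Q + ∑ i, b i * (Q / q i)) →
        t ≤ n * z + k * (P / p L) := by
      rintro t ⟨b, hbt⟩
      have h8 : t * Q ≤ n * z + k * (P / p L) := by omega
      have h9 := Nat.le_mul_of_pos_right t hQ1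
      omega
    have hb2 : ∀ t, (∃ a : Fin (l + 1) → ℕ,
        z = t * P + ∑ i, a i * (P / p i)) → t ≤ z := by
      rintro t ⟨a, hat⟩
      have h8 : t * P ≤ z := by omega
      have h9 := Nat.le_mul_of_pos_right t hP1
      omega
    exact @findGreatest_congr _ _ (Classical.decPred _) (Classical.decPred _) _ _
      (fun t => (key t z).symm) hb1 hb2 ((key 0 z).mp ⟨a0, by simpa using ha0⟩)
end

section
/- With Y = Σ(p₁,...,p_l) and Y' = Σ(p₁,...,p_{l-1}, n p_l) as above, N_{Y'} = n·N_Y + (n-1)·p₁⋯p_{l-1}, and for 0 ≤ i < j ≤ n-1 the images of φ_i and φ_j on G_Y are disjoint, where φ_k(z) = nz + k p₁⋯p_{l-1}. -/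
/-- For `Y = Σ(p₁,…,p_l)` and `Y' = Σ(p₁,…,p_{l-1}, n p_l)`:
`N_{Y'} = n·N_Y + (n-1)·p₁⋯p_{l-1}`, and for `0 ≤ i < j ≤ n-1` the images of
`φ_i(z) = nz + i·p₁⋯p_{l-1}` and `φ_j` on `G_Y` are disjoint. -/
theorem branched_cover_disjointness (l : ℕ) (p : Fin (l + 1) → ℕ)
    (h2 : ∀ i, 2 ≤ p i)
    (hcop : ∀ i j, i ≠ j → Nat.Coprime (p i) (p j))
    (n : ℕ) (hn : 1 ≤ n)
    (hncop : ∀ i, i ≠ Fin.last l → Nat.Coprime n (p i))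
    (q : Fin (l + 1) → ℕ)
    (hq : q = fun i => if i = Fin.last l then n * p i else p i) :
    seifN q = (n : ℤ) * seifN p +
        ((n : ℤ) - 1) * (((∏ j, p j) / p (Fin.last l) : ℕ) : ℤ) ∧
      ∀ i j : ℕ, i < j → j < n → ∀ z₁ z₂ : ℕ, inG p z₁ → inG p z₂ →
        n * z₁ + i * ((∏ j, p j) / p (Fin.last l)) ≠
          n * z₂ + j * ((∏ j, p j) / p (Fin.last l)) := by
  subst hq
  have hplast : 0 < p (Fin.last l) := lt_of_lt_of_le two_pos (h2 _)
  have hnpos : 0 < n := hn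
  have hdvd : ∀ i, p i ∣ ∏ j, p j := fun i => Finset.dvd_prod_of_mem _ (Finset.mem_univ i)
  have hQ : (∏ j, p j) / p (Fin.last l) = ∏ i : Fin l, p i.castSucc := by
    rw [Fin.prod_univ_castSucc, Nat.mul_div_cancel _ hplast]
  have hcsne : ∀ i : Fin l, i.castSucc ≠ Fin.last l := fun i => (Fin.castSucc_lt_last i).ne
  have hite : ∀ i : Fin l,
      (if i.castSucc = Fin.last l then n * p i.castSucc else p i.castSucc) = p i.castSucc :=
    fun i => if_neg (hcsne i)
  have hprodq : (∏ j, (if j = Fin.last l then n * p j else p j)) = n * ∏ j, p j := by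
    rw [Fin.prod_univ_castSucc, Fin.prod_univ_castSucc (f := p)]
    simp only [hite]
    rw [if_pos trivial]
    ring
  constructor
  · unfold seifN
    rw [show (∏ i, ((if i = Fin.last l then n * p i else p i : ℕ) : ℤ))
          = ((n * ∏ j, p j : ℕ) : ℤ) by rw [← hprodq]; push_cast; rfl,
      show (∏ i, ((p i : ℕ) : ℤ)) = ((∏ j, p j : ℕ) : ℤ) by push_cast; rfl]
    rw [Fin.sum_univ_castSucc
        (f := fun i => ((((∏ j, (if j = Fin.last l then n * p j else p j))
          / (if i = Fin.last l then n * p i else p i)) : ℕ) : ℤ)),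
      Fin.sum_univ_castSucc (f := fun i => ((((∏ j, p j) / p i) : ℕ) : ℤ))]
    simp only [hite, hprodq, if_pos (trivial : True)]
    have hlastdiv : (n * ∏ j, p j) / (n * p (Fin.last l)) = (∏ j, p j) / p (Fin.last l) :=
      Nat.mul_div_mul_left _ _ hnpos
    have hdivi : ∀ i : Fin l, (n * ∏ j, p j) / p i.castSucc = n * ((∏ j, p j) / p i.castSucc) :=
      fun i => Nat.mul_div_assoc n (hdvd i.castSucc)
    simp only [hlastdiv, hdivi, Nat.cast_mul]
    rw [← Finset.mul_sum]
    ring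
  · intro i j hij hjn z₁ z₂ _ _ heq
    have hQcop : Nat.Coprime n ((∏ j, p j) / p (Fin.last l)) := by
      rw [hQ]
      exact Nat.Coprime.prod_right fun i _ => hncop _ (hcsne i)
    set Q := (∏ j, p j) / p (Fin.last l) with hQdef
    have heqZ : (n : ℤ) * z₁ + i * Q = n * z₂ + j * Q := by exact_mod_cast heq
    have hdd : (n : ℤ) ∣ ((j : ℤ) - i) * Q := ⟨(z₁ : ℤ) - z₂, by linarith⟩
    have hcopZ : IsCoprime (n : ℤ) (Q : ℤ) := Int.isCoprime_iff_gcd_eq_one.mpr hQcop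
    have hdji : (n : ℤ) ∣ ((j : ℤ) - i) := hcopZ.dvd_of_dvd_mul_right hdd
    have : (n : ℤ) ∣ ((j - i : ℕ) : ℤ) := by rwa [Nat.cast_sub hij.le]
    have hnd : n ∣ j - i := Int.natCast_dvd_natCast.mp this
    have := Nat.le_of_dvd (by omega) hnd
    omega
end

section
/- Let pᵢ ≤ qᵢ be two tuples of pairwise coprime integers ≥ 2. Define φ : G_Y → G_{Y'} by sending the element with normal form p₁⋯p_l(k + Σ xᵢ/pᵢ) (k ≥ 0, 0 ≤ xᵢ < pᵢ) to q₁⋯q_l(k + Σ xᵢ/qᵢ). Then φ is injective and superadditive: φ(x) + φ(x') ≤ φ(x + x') for all x, x' ∈ G_Y. -/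
/-!
Write `m = P k + Σ xᵢ P/pᵢ` with `P = ∏ pᵢ`. Since `pᵢ` divides every `P/pⱼ` with `j ≠ i` and is
coprime to `P/pᵢ`, the residue of `m` mod `pᵢ` determines `xᵢ` when `xᵢ < pᵢ`; so normal forms are
unique, for `q` as for `p`, and `φ` is injective. Adding two normal forms and reducing the digit
sums `sᵢ = xᵢ + xᵢ'` mod `pᵢ` carries `sᵢ / pᵢ` into `k`. Read with `q`, such a carry is worth
`(sᵢ / pᵢ) Q`, at least the `(sᵢ / pᵢ) pᵢ Q/qᵢ` that the unreduced digits contribute, as `pᵢ ≤ qᵢ`.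
-/

section NormalForm

open Function

variable {ι : Type*} [Fintype ι] (p : ι → ℕ)

/-- `normalForm p k x = p₁⋯p_l (k + Σ xᵢ/pᵢ)`; the digits `x` are not required to be `< p`. -/
def normalForm (k : ℕ) (x : ι → ℕ) : ℕ :=
  k * ∏ j, p j + ∑ i, x i * ((∏ j, p j) / p i)

theorem normalForm_add (k k' : ℕ) (x x' : ι → ℕ) :
    normalForm p k x + normalForm p k' x' = normalForm p (k + k') (x + x') := by
  simp only [normalForm, Pi.add_apply, add_mul, Finset.sum_add_distrib]
  ring

theorem normalForm_mono {k : ℕ} {x x' : ι → ℕ} (h : x ≤ x') :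
    normalForm p k x ≤ normalForm p k x' :=
  Nat.add_le_add_left (Finset.sum_le_sum fun i _ => Nat.mul_le_mul_right _ (h i)) _

theorem normalForm_carry (k : ℕ) (c y : ι → ℕ) :
    normalForm p k (fun i => c i * p i + y i) = normalForm p (k + ∑ i, c i) y := by
  have hcarry : ∀ i, c i * p i * ((∏ j, p j) / p i) = c i * ∏ j, p j := fun i => by
    rw [mul_assoc, Nat.mul_div_cancel' (Finset.dvd_prod_of_mem p (Finset.mem_univ i))]
  simp only [normalForm, add_mul, Finset.sum_add_distrib, hcarry, ← Finset.sum_mul]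
  ring

theorem normalForm_eq_normalForm_mod (k : ℕ) (x : ι → ℕ) :
    normalForm p k x = normalForm p (k + ∑ i, x i / p i) (fun i => x i % p i) := by
  rw [← normalForm_carry]
  simp only [Nat.div_add_mod']

theorem exists_normalForm_of_inG {l : ℕ} {p : Fin l → ℕ} (hp : ∀ i, 0 < p i) {m : ℕ}
    (hm : inG p m) : ∃ k x, (∀ i, x i < p i) ∧ m = normalForm p k x := by
  obtain ⟨a, rfl⟩ := hm
  refine ⟨0 + ∑ i, a i / p i, fun i => a i % p i, fun i => Nat.mod_lt _ (hp i), ?_⟩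
  rw [← normalForm_eq_normalForm_mod, normalForm, zero_mul, zero_add]

theorem dvd_prod_div_of_ne {i j : ι} (h : i ≠ j) : p i ∣ (∏ k, p k) / p j := by
  classical
  refine Nat.dvd_div_of_mul_dvd ?_
  rw [mul_comm, ← Finset.prod_pair h]
  exact Finset.prod_dvd_prod_of_subset _ _ _ (Finset.subset_univ _)

theorem normalForm_modEq (k : ℕ) (x : ι → ℕ) (i : ι) :
    normalForm p k x ≡ x i * ((∏ j, p j) / p i) [MOD p i] := by
  classical
  have hrest : p i ∣ k * ∏ j, p j + ∑ j ∈ Finset.univ.erase i, x j * ((∏ k, p k) / p j) :=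
    dvd_add (Dvd.dvd.mul_left (Finset.dvd_prod_of_mem p (Finset.mem_univ i)) k)
      (Finset.dvd_sum fun j hj => Dvd.dvd.mul_left
        (dvd_prod_div_of_ne p (Finset.ne_of_mem_erase hj).symm) _)
  have hsplit : normalForm p k x = x i * ((∏ j, p j) / p i) +
      (k * ∏ j, p j + ∑ j ∈ Finset.univ.erase i, x j * ((∏ k, p k) / p j)) := by
    rw [normalForm, ← Finset.add_sum_erase _ _ (Finset.mem_univ i)]
    ring
  rw [hsplit]
  simpa using (Nat.modEq_zero_iff_dvd.mpr hrest).add_left (x i * ((∏ j, p j) / p i))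

theorem coprime_prod_div {i : ι} (hi : 0 < p i) (hcop : Pairwise (Nat.Coprime on p)) :
    Nat.Coprime ((∏ j, p j) / p i) (p i) := by
  classical
  rw [← Finset.prod_erase_mul _ _ (Finset.mem_univ i), Nat.mul_div_cancel _ hi]
  exact Nat.Coprime.prod_left fun j hj => hcop (Finset.ne_of_mem_erase hj)

theorem normalForm_inj (hcop : Pairwise (Nat.Coprime on p)) {k k' : ℕ} {x x' : ι → ℕ}
    (hx : ∀ i, x i < p i) (hx' : ∀ i, x' i < p i)
    (h : normalForm p k x = normalForm p k' x') : k = k' ∧ x = x' := by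
  have hp : ∀ i, 0 < p i := fun i => Nat.zero_lt_of_lt (hx i)
  obtain rfl : x = x' := funext fun i => by
    have hmod := (normalForm_modEq p k x i).symm.trans (h ▸ normalForm_modEq p k' x' i)
    exact (hmod.cancel_right_of_coprime (coprime_prod_div p (hp i) hcop).symm).eq_of_lt_of_lt
      (hx i) (hx' i)
  have hP : 0 < ∏ j, p j := Finset.prod_pos fun i _ => hp i
  refine ⟨Nat.eq_of_mul_eq_mul_right hP ?_, rfl⟩
  simpa [normalForm] using h

end NormalForm

theorem normal_form_map_injective_superadditive_general (l : ℕ) (p q : Fin l → ℕ)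
    (hp2 : ∀ i, 2 ≤ p i)
    (hqcop : ∀ i j, i ≠ j → Nat.Coprime (q i) (q j))
    (hpq : ∀ i, p i ≤ q i)
    (φ : ℕ → ℕ)
    (hφ : ∀ (k : ℕ) (x : Fin l → ℕ), (∀ i, x i < p i) →
      φ (k * (∏ j, p j) + ∑ i, x i * ((∏ j, p j) / p i)) =
        k * (∏ j, q j) + ∑ i, x i * ((∏ j, q j) / q i)) :
    Set.InjOn φ {m : ℕ | inG p m} ∧
      ∀ x x' : ℕ, inG p x → inG p x' → φ x + φ x' ≤ φ (x + x') := by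
  have hp : ∀ i, 0 < p i := fun i => zero_lt_two.trans_le (hp2 i)
  have hφ' : ∀ k x, (∀ i, x i < p i) → φ (normalForm p k x) = normalForm q k x := hφ
  constructor
  · intro m hm m' hm' h
    obtain ⟨k, x, hx, rfl⟩ := exists_normalForm_of_inG hp hm
    obtain ⟨k', x', hx', rfl⟩ := exists_normalForm_of_inG hp hm'
    rw [hφ' k x hx, hφ' k' x' hx'] at h
    obtain ⟨rfl, rfl⟩ := normalForm_inj q hqcop (fun i => (hx i).trans_le (hpq i))
      (fun i => (hx' i).trans_le (hpq i)) h
    rfl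
  · intro m m' hm hm'
    obtain ⟨k, x, hx, rfl⟩ := exists_normalForm_of_inG hp hm
    obtain ⟨k', x', hx', rfl⟩ := exists_normalForm_of_inG hp hm'
    set s := x + x'
    -- both sides become `normalForm q (k + k') _`, with digits `s` and `s / p * q + s % p`
    rw [hφ' k x hx, hφ' k' x' hx', normalForm_add, normalForm_add, normalForm_eq_normalForm_mod p,
      hφ' _ _ fun i => Nat.mod_lt _ (hp i), ← normalForm_carry]
    refine normalForm_mono q fun i => ?_
    calc s i = s i / p i * p i + s i % p i := (Nat.div_add_mod' _ _).symm
      _ ≤ s i / p i * q i + s i % p i := by gcongr; exact hpq i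

/-- If `pᵢ ≤ qᵢ` are tuples of pairwise coprime integers `≥ 2`, then the map
`φ : G_Y → G_{Y'}` sending the normal form `p₁⋯p_l(k + Σ xᵢ/pᵢ)` to
`q₁⋯q_l(k + Σ xᵢ/qᵢ)` is injective and superadditive:
`φ(x) + φ(x') ≤ φ(x + x')`. -/
theorem normal_form_map_injective_superadditive (l : ℕ) (p q : Fin l → ℕ)
    (hp2 : ∀ i, 2 ≤ p i) (hq2 : ∀ i, 2 ≤ q i)
    (hpcop : ∀ i j, i ≠ j → Nat.Coprime (p i) (p j))
    (hqcop : ∀ i j, i ≠ j → Nat.Coprime (q i) (q j))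
    (hpq : ∀ i, p i ≤ q i)
    (φ : ℕ → ℕ)
    (hφ : ∀ (k : ℕ) (x : Fin l → ℕ), (∀ i, x i < p i) →
      φ (k * (∏ j, p j) + ∑ i, x i * ((∏ j, p j) / p i)) =
        k * (∏ j, q j) + ∑ i, x i * ((∏ j, q j) / q i)) :
    Set.InjOn φ {m : ℕ | inG p m} ∧
      ∀ x x' : ℕ, inG p x → inG p x' → φ x + φ x' ≤ φ (x + x') :=
  normal_form_map_injective_superadditive_general l p q hp2 hqcop hpq φ hφ
end
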